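/- arXiv:0807.4700 — 7 statements merged into one kernel-verified Lean document; each statement's English description precedes it below -/
import Mathlib

section
/- Let d ≥ 1 be an integer, 1 < α ≤ 2 and β ≥ d. Then every measure μ ∈ M_{α,β} is diffuse, i.e. μ({x}) = 0 for every x ∈ ℝ^d. -/
/-!
If `μ` had an atom `μ {x₀} = c ≠ 0`, then for small `r` and every `x ∈ B(x₀, r)` the ball
`B(x, r)` contains `x₀` and carries total variation less than `|c| / 2` besides it, so
`|μ (B(x, r))| ≥ |c| / 2`. Integrating over `B(x₀, r)` gives
`∫ |μ (B(x, r))| ^ α dx ≥ K r ^ d` with `K > 0`, which is incompatible with the bound `C r ^ q`,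
`q > β ≥ d`, as `r → 0`.
-/

open MeasureTheory Filter Set
open scoped ENNReal Topology

noncomputable section

/-- The space `M_{α,β}` of finite signed measures `μ` on `ℝ^d` such that
`∫_{ℝ^d} |μ(B(x,r))|^α dx ≤ C (r^p ∧ r^q)` for all `r > 0`, for some finite constant `C`
and exponents `0 < p < β < q`. -/
def MemM (d : ℕ) (α β : ℝ)
    (μ : MeasureTheory.SignedMeasure (EuclideanSpace ℝ (Fin d))) : Prop :=
  ∃ C p q : ℝ, 0 < p ∧ p < β ∧ β < q ∧
    ∀ r : ℝ, 0 < r →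
      (∫ x : EuclideanSpace ℝ (Fin d), |μ (Metric.ball x r)| ^ α) ≤ C * min (r ^ p) (r ^ q)

open Metric

theorem Real.rpow_le_rpow_sub_one_mul {a b M α : ℝ} (hα : 1 ≤ α) (ha : 0 ≤ a) (hab : a ≤ b)
    (hbM : b ≤ M) : a ^ α ≤ M ^ (α - 1) * b := by
  calc a ^ α = a ^ (α - 1) * a ^ (1 : ℝ) := by
        rw [← Real.rpow_add' ha (by linarith), sub_add_cancel]
    _ ≤ M ^ (α - 1) * b := by
        rw [Real.rpow_one]
        gcongr
        · exact Real.rpow_nonneg (ha.trans (hab.trans hbM)) _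
        · linarith

theorem nonpos_of_eventually_mul_pow_le_mul_rpow {K C q : ℝ} {n : ℕ} (hnq : (n : ℝ) < q)
    (h : ∀ᶠ r in 𝓝[>] (0 : ℝ), K * r ^ n ≤ C * r ^ q) : K ≤ 0 := by
  have htend : Tendsto (fun r : ℝ => C * r ^ (q - n)) (𝓝[>] 0) (𝓝 0) := by
    have hcont := Real.continuousAt_rpow_const 0 (q - n) (Or.inr (sub_pos.2 hnq).le)
    simpa [Real.zero_rpow (sub_pos.2 hnq).ne'] using
      (hcont.tendsto.mono_left nhdsWithin_le_nhds).const_mul C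
  refine ge_of_tendsto htend ?_
  filter_upwards [h, self_mem_nhdsWithin] with r hr (hr0 : 0 < r)
  rw [← mul_le_mul_iff_of_pos_right (pow_pos hr0 n), mul_assoc,
    Real.rpow_sub_natCast hr0.ne', div_mul_cancel₀ _ (pow_pos hr0 n).ne']
  exact hr

namespace MeasureTheory

section MetricSpace

variable {X : Type*} [MetricSpace X] [MeasurableSpace X] [OpensMeasurableSpace X]

theorem tendsto_measureReal_ball_sdiff_singleton (ν : Measure X) [IsFiniteMeasure ν] (x₀ : X) :
    Tendsto (fun r => ν.real (ball x₀ r \ {x₀})) (𝓝[>] 0) (𝓝 0) := by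
  have h := tendsto_measure_biInter_gt (μ := ν) (s := fun r => ball x₀ r \ {x₀}) (a := (0 : ℝ))
    (fun r _ => (measurableSet_ball.diff (measurableSet_singleton x₀)).nullMeasurableSet)
    (fun i j _ hij => sdiff_subset_sdiff_left (ball_subset_ball hij))
    ⟨1, one_pos, measure_ne_top _ _⟩
  have hempty : ⋂ r > (0 : ℝ), ball x₀ r \ {x₀} = ∅ := by
    refine eq_empty_of_forall_notMem fun y hy => ?_
    simp only [mem_iInter, Set.mem_sdiff, mem_ball, mem_singleton_iff] at hy
    have hyx : 0 < dist y x₀ := dist_pos.2 (hy 1 one_pos).2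
    exact (hy _ hyx).1.false
  rw [hempty, measure_empty] at h
  have := (ENNReal.tendsto_toReal ENNReal.zero_ne_top).comp h
  rwa [ENNReal.toReal_zero] at this

theorem SignedMeasure.abs_apply_singleton_sub_le_abs_apply_ball (μ : SignedMeasure X)
    {x₀ x : X} {r : ℝ} (hx : x ∈ ball x₀ r) :
    |μ {x₀}| - μ.totalVariation.real (ball x₀ (2 * r) \ {x₀}) ≤ |μ (ball x r)| := by
  have hsplit : μ {x₀} + μ (ball x r \ {x₀}) = μ (ball x r) :=
    VectorMeasure.of_add_of_sdiff (measurableSet_singleton x₀) measurableSet_ball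
      (singleton_subset_iff.2 (mem_ball_comm.1 hx))
  have hsub : ball x r ⊆ ball x₀ (2 * r) :=
    ball_subset_ball' (by linarith [mem_ball.1 hx])
  have htail : |μ (ball x r \ {x₀})| ≤ μ.totalVariation.real (ball x₀ (2 * r) \ {x₀}) :=
    (μ.norm_le_totalVariation _).trans (measureReal_mono (sdiff_subset_sdiff_left hsub))
  have hatom : μ {x₀} = μ (ball x r) - μ (ball x r \ {x₀}) := by rw [← hsplit]; ring
  have := abs_sub (μ (ball x r)) (μ (ball x r \ {x₀}))
  rw [← hatom] at this
  linarith

variable [SecondCountableTopology X]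

theorem measurableSet_setOf_dist_lt (r : ℝ) : MeasurableSet {p : X × X | dist p.2 p.1 < r} :=
  measurableSet_lt (measurable_snd.dist measurable_fst) measurable_const

theorem Measure.measurable_measure_ball (ν : Measure X) [SFinite ν] (r : ℝ) :
    Measurable fun x => ν (ball x r) :=
  measurable_measure_prodMk_left (measurableSet_setOf_dist_lt r)

theorem Measure.lintegral_measure_ball_comm (μ ν : Measure X) [SFinite μ] [SFinite ν] (r : ℝ) :
    ∫⁻ x, ν (ball x r) ∂μ = ∫⁻ y, μ (ball y r) ∂ν := by
  have hS := measurableSet_setOf_dist_lt (X := X) r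
  calc ∫⁻ x, ν (ball x r) ∂μ = μ.prod ν {p : X × X | dist p.2 p.1 < r} :=
        (Measure.prod_apply hS).symm
    _ = ∫⁻ y, μ (ball y r) ∂ν := by
        rw [Measure.prod_apply_symm hS]
        congr! with y
        ext x
        simp [dist_comm]

theorem SignedMeasure.measurable_apply_ball (μ : SignedMeasure X) (r : ℝ) :
    Measurable fun x => μ (ball x r) := by
  simp_rw [μ.apply_eq_posPart_real_sub_negPart_real measurableSet_ball, measureReal_def]
  exact (Measure.measurable_measure_ball _ r).ennreal_toReal.sub
    (Measure.measurable_measure_ball _ r).ennreal_toReal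

end MetricSpace

section AddHaar

variable {E : Type*} [NormedAddCommGroup E] [NormedSpace ℝ E] [FiniteDimensional ℝ E]
  [MeasurableSpace E] [BorelSpace E] (ρ : Measure E) [ρ.IsAddHaarMeasure]

theorem Measure.lintegral_measure_ball_eq_mul (ν : Measure E) [SFinite ν] (r : ℝ) :
    ∫⁻ x, ν (ball x r) ∂ρ = ρ (ball 0 r) * ν univ := by
  simp_rw [Measure.lintegral_measure_ball_comm ρ ν, Measure.addHaar_ball_center, lintegral_const]

theorem SignedMeasure.integrable_abs_apply_ball_rpow (μ : SignedMeasure E) {α : ℝ} (hα : 1 ≤ α)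
    (r : ℝ) : Integrable (fun x => |μ (ball x r)| ^ α) ρ := by
  set ν := μ.totalVariation
  have hν : Integrable (fun x => ν.real (ball x r)) ρ :=
    integrable_toReal_of_lintegral_ne_top (Measure.measurable_measure_ball ν r).aemeasurable
      (by rw [Measure.lintegral_measure_ball_eq_mul]; finiteness)
  refine (hν.const_mul (ν.real univ ^ (α - 1))).mono'
    ((μ.measurable_apply_ball r).abs.pow_const α).aestronglyMeasurable
    (Eventually.of_forall fun x => ?_)
  rw [Real.norm_of_nonneg (by positivity)]
  exact Real.rpow_le_rpow_sub_one_mul hα (abs_nonneg _) (μ.norm_le_totalVariation _)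
    (measureReal_mono (subset_univ _))

theorem SignedMeasure.exists_pos_eventually_mul_pow_le_integral (μ : SignedMeasure E) {α : ℝ}
    (hα : 1 ≤ α) {x₀ : E} (hx₀ : μ {x₀} ≠ 0) :
    ∃ K > 0, ∀ᶠ r in 𝓝[>] 0, K * r ^ Module.finrank ℝ E ≤ ∫ x, |μ (ball x r)| ^ α ∂ρ := by
  set c := |μ {x₀}|
  have hc : 0 < c := abs_pos.2 hx₀
  have hball : 0 < ρ.real (ball 0 1) :=
    ENNReal.toReal_pos (measure_ball_pos ρ 0 one_pos).ne' measure_ball_lt_top.ne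
  refine ⟨(c / 2) ^ α * ρ.real (ball 0 1), by positivity, ?_⟩
  have htail : ∀ᶠ r in 𝓝[>] 0, μ.totalVariation.real (ball x₀ r \ {x₀}) ≤ c / 2 :=
    (tendsto_measureReal_ball_sdiff_singleton _ x₀).eventually (Iic_mem_nhds (half_pos hc))
  have hint := μ.integrable_abs_apply_ball_rpow ρ hα
  filter_upwards [eventually_nhdsGT_zero_mul_left two_pos htail, self_mem_nhdsWithin]
    with r hr (hr0 : 0 < r)
  calc (c / 2) ^ α * ρ.real (ball 0 1) * r ^ Module.finrank ℝ E
      = (c / 2) ^ α * ρ.real (ball x₀ r) := by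
        rw [measureReal_def, measureReal_def, Measure.addHaar_ball_of_pos ρ x₀ hr0,
          ENNReal.toReal_mul, ENNReal.toReal_ofReal (by positivity)]
        ring
    _ ≤ ∫ x in ball x₀ r, |μ (ball x r)| ^ α ∂ρ :=
        setIntegral_ge_of_const_le_real measurableSet_ball measure_ball_lt_top.ne
          (fun x hx => Real.rpow_le_rpow (by positivity)
            (by linarith [μ.abs_apply_singleton_sub_le_abs_apply_ball hx]) (by linarith))
          (hint r).integrableOn
    _ ≤ ∫ x, |μ (ball x r)| ^ α ∂ρ :=
        setIntegral_le_integral (hint r) (Eventually.of_forall fun _ => by positivity)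

end AddHaar

end MeasureTheory

theorem statement4_general (d : ℕ) (α β : ℝ) (hα1 : 1 < α)
    (hβ : (d : ℝ) ≤ β)
    (μ : MeasureTheory.SignedMeasure (EuclideanSpace ℝ (Fin d))) (hμ : MemM d α β μ) :
    ∀ x : EuclideanSpace ℝ (Fin d), μ {x} = 0 := by
  intro x₀
  by_contra hx₀
  obtain ⟨C, p, q, -, -, hβq, hC⟩ := hμ
  have hC0 : 0 ≤ C := by
    simpa using (integral_nonneg fun x => by positivity).trans (hC 1 one_pos)
  obtain ⟨K, hK, hlower⟩ := μ.exists_pos_eventually_mul_pow_le_integral volume hα1.le hx₀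
  refine hK.not_ge (nonpos_of_eventually_mul_pow_le_mul_rpow (C := C) (hβ.trans_lt hβq) ?_)
  filter_upwards [hlower, self_mem_nhdsWithin] with r hr (hr0 : 0 < r)
  rw [finrank_euclideanSpace_fin] at hr
  exact hr.trans ((hC r hr0).trans (mul_le_mul_of_nonneg_left (min_le_right _ _) hC0))

/-- if `β ≥ d`, every `μ ∈ M_{α,β}` is diffuse: `μ({x}) = 0` for all `x`. -/
theorem statement4 (d : ℕ) (hd : 1 ≤ d) (α β : ℝ) (hα1 : 1 < α) (hα2 : α ≤ 2)
    (hβ : (d : ℝ) ≤ β)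
    (μ : MeasureTheory.SignedMeasure (EuclideanSpace ℝ (Fin d))) (hμ : MemM d α β μ) :
    ∀ x : EuclideanSpace ℝ (Fin d), μ {x} = 0 :=
  statement4_general d α β hα1 hβ μ hμ
end
end

section
/- Let d ≥ 1 be an integer, 1 < α ≤ 2 and d < β < αd. If φ ∈ L¹(ℝ^d) ∩ L^α(ℝ^d) and μ is the signed measure with density φ with respect to Lebesgue measure, i.e. μ(A) = ∫_A φ(x) dx, then μ ∈ M_{α,β}. More precisely, for every r > 0 one has ∫_{ℝ^d} |μ(B(x,r))|^α dx ≤ (c_d r^d)^α ∫_{ℝ^d} |φ(y)|^α dy and ∫_{ℝ^d} |μ(B(x,r))|^α dx ≤ c_d r^d (∫_{ℝ^d} |φ(y)| dy)^α. -/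
/-!
Since `|μ(B(x,r))| ≤ ∫_{B(x,r)} |φ|`, both bounds come from a pointwise estimate
`(∫_{B(x,r)} |φ|)^α ≤ c ∫_{B(x,r)} h` integrated in `x`: as `y ∈ B(x,r) ↔ x ∈ B(y,r)`, Fubini gives
`∫ (∫_{B(x,r)} h) dx = |B(0,r)| ∫ h`. For `h = |φ|^α` the estimate is Hölder's inequality on the
ball, with `c = |B(0,r)|^{α-1}`; for `h = |φ|` it is `t^α ≤ ‖φ‖₁^{α-1} t` for `0 ≤ t ≤ ‖φ‖₁`.
The first bound is of order `r^{αd}`, the second of order `r^d`, so `μ ∈ M_{α,β}` with `p = d`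
and `q = αd`.
-/

open MeasureTheory Filter Set
open scoped ENNReal Topology

noncomputable section

theorem Real.rpow_le_rpow_sub_one_mul_of_le {t M p : ℝ} (ht : 0 ≤ t) (htM : t ≤ M) (hp : 1 ≤ p) :
    t ^ p ≤ M ^ (p - 1) * t := by
  calc t ^ p = t ^ (p - 1) * t := by
        rw [← Real.rpow_add_one' ht (by linarith), sub_add_cancel]
    _ ≤ M ^ (p - 1) * t := by gcongr

theorem rpow_integral_le_measureReal_univ_mul_integral_rpow {Ω : Type*} [MeasurableSpace Ω]
    {ν : Measure Ω} [IsFiniteMeasure ν] {p : ℝ} (hp : 1 < p) {f : Ω → ℝ}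
    (hf_nonneg : 0 ≤ᵐ[ν] f) (hf : MemLp f (ENNReal.ofReal p) ν) :
    (∫ x, f x ∂ν) ^ p ≤ ν.real univ ^ (p - 1) * ∫ x, f x ^ p ∂ν := by
  have hpq : p.HolderConjugate p.conjExponent := .conjExponent hp
  have hHolder := integral_mul_le_Lp_mul_Lq_of_nonneg hpq hf_nonneg
    (ae_of_all _ fun _ => zero_le_one) hf (memLp_const (1 : ℝ))
  simp only [mul_one, Real.one_rpow, integral_const, smul_eq_mul] at hHolder
  have hA : 0 ≤ ∫ x, f x ^ p ∂ν :=
    integral_nonneg_of_ae (hf_nonneg.mono fun x hx => Real.rpow_nonneg hx p)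
  calc (∫ x, f x ∂ν) ^ p
      ≤ ((∫ x, f x ^ p ∂ν) ^ (1 / p) * ν.real univ ^ (1 / p.conjExponent)) ^ p :=
        Real.rpow_le_rpow (integral_nonneg_of_ae hf_nonneg) hHolder (by linarith)
    _ = ν.real univ ^ (p - 1) * ∫ x, f x ^ p ∂ν := by
        rw [Real.mul_rpow (by positivity) (by positivity), ← Real.rpow_mul hA,
          ← Real.rpow_mul measureReal_nonneg, one_div_mul_cancel (by linarith), Real.rpow_one,
          one_div_mul_eq_div, hpq.div_conj_eq_sub_one, mul_comm]

theorem abs_withDensityᵥ_le_setIntegral_abs {Ω : Type*} [MeasurableSpace Ω] {μ : Measure Ω}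
    {f : Ω → ℝ} (hf : Integrable f μ) {s : Set Ω} (hs : MeasurableSet s) :
    |μ.withDensityᵥ f s| ≤ ∫ x in s, |f x| ∂μ := by
  rw [withDensityᵥ_apply hf hs]
  exact abs_integral_le_integral_abs

theorem indicator_ball_apply_comm {X M : Type*} [PseudoMetricSpace X] [Zero M] (f : X → M)
    (x y : X) (r : ℝ) :
    (Metric.ball x r).indicator f y = (Metric.ball y r).indicator (fun _ => f y) x := by
  simp only [Set.indicator, Metric.mem_ball, dist_comm x y]

section HaarBall

variable {E : Type*} [NormedAddCommGroup E] [MeasurableSpace E] [BorelSpace E]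
  {μ : Measure E} [μ.IsAddHaarMeasure]

variable (μ) in
theorem integral_indicator_ball_apply (f : E → ℝ) (y : E) (r : ℝ) :
    ∫ x, (Metric.ball x r).indicator f y ∂μ = μ.real (Metric.ball 0 r) * f y := by
  simp only [indicator_ball_apply_comm f _ y, integral_indicator_const _ measurableSet_ball,
    Measure.addHaar_real_ball_center, smul_eq_mul]

theorem integrable_indicator_ball_prod [ProperSpace E] {f : E → ℝ} (hf : Integrable f μ)
    (r : ℝ) :
    Integrable (fun p : E × E => (Metric.ball p.1 r).indicator f p.2) (μ.prod μ) := by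
  have hmeas : AEStronglyMeasurable (fun p : E × E => (Metric.ball p.1 r).indicator f p.2)
      (μ.prod μ) :=
    hf.1.comp_snd.indicator (measurableSet_lt (measurable_snd.dist measurable_fst) measurable_const)
  refine (integrable_prod_iff' hmeas).2 ⟨ae_of_all _ fun y => ?_, ?_⟩
  · simp only [indicator_ball_apply_comm f _ y]
    exact (integrable_indicator_iff measurableSet_ball).2
      (integrableOn_const measure_ball_lt_top.ne)
  · simp only [norm_indicator_eq_indicator_norm, integral_indicator_ball_apply]
    exact hf.norm.const_mul _

theorem integrable_integral_ball [ProperSpace E] {f : E → ℝ} (hf : Integrable f μ) (r : ℝ) :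
    Integrable (fun x => ∫ y in Metric.ball x r, f y ∂μ) μ := by
  simpa only [integral_indicator measurableSet_ball] using
    (integrable_indicator_ball_prod hf r).integral_prod_left

theorem integral_integral_ball [ProperSpace E] {f : E → ℝ} (hf : Integrable f μ) (r : ℝ) :
    ∫ x, ∫ y in Metric.ball x r, f y ∂μ ∂μ = μ.real (Metric.ball 0 r) * ∫ y, f y ∂μ := by
  simp only [← integral_indicator measurableSet_ball]
  rw [integral_integral_swap (integrable_indicator_ball_prod hf r)]
  simp only [integral_indicator_ball_apply, integral_const_mul]

theorem integral_le_of_le_integral_ball [ProperSpace E] {F h : E → ℝ} {c r : ℝ} (hF : 0 ≤ F)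
    (hh : Integrable h μ) (hle : ∀ x, F x ≤ c * ∫ y in Metric.ball x r, h y ∂μ) :
    ∫ x, F x ∂μ ≤ c * μ.real (Metric.ball 0 r) * ∫ y, h y ∂μ :=
  calc ∫ x, F x ∂μ ≤ ∫ x, c * ∫ y in Metric.ball x r, h y ∂μ ∂μ :=
        integral_mono_of_nonneg (ae_of_all _ hF) ((integrable_integral_ball hh r).const_mul c)
          (ae_of_all _ hle)
    _ = c * μ.real (Metric.ball 0 r) * ∫ y, h y ∂μ := by
        rw [integral_const_mul, integral_integral_ball hh, mul_assoc]

theorem integral_abs_withDensityᵥ_ball_rpow_le_integral_abs_rpow [ProperSpace E] {α : ℝ}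
    (hα : 1 < α) {φ : E → ℝ} (hφ : Integrable φ μ) (hφα : MemLp φ (ENNReal.ofReal α) μ) (r : ℝ) :
    ∫ x, |μ.withDensityᵥ φ (Metric.ball x r)| ^ α ∂μ
      ≤ μ.real (Metric.ball 0 r) ^ α * ∫ y, |φ y| ^ α ∂μ := by
  set m := μ.real (Metric.ball (0 : E) r)
  have hball (x : E) : |μ.withDensityᵥ φ (Metric.ball x r)| ^ α
      ≤ m ^ (α - 1) * ∫ y in Metric.ball x r, |φ y| ^ α ∂μ := by
    have : IsFiniteMeasure (μ.restrict (Metric.ball x r)) :=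
      isFiniteMeasure_restrict.2 measure_ball_lt_top.ne
    calc |μ.withDensityᵥ φ (Metric.ball x r)| ^ α ≤ (∫ y in Metric.ball x r, |φ y| ∂μ) ^ α :=
          Real.rpow_le_rpow (abs_nonneg _)
            (abs_withDensityᵥ_le_setIntegral_abs hφ measurableSet_ball) (by linarith)
      _ ≤ (μ.restrict (Metric.ball x r)).real univ ^ (α - 1)
            * ∫ y in Metric.ball x r, |φ y| ^ α ∂μ :=
          rpow_integral_le_measureReal_univ_mul_integral_rpow hα
            (ae_of_all _ fun _ => abs_nonneg _) (hφα.restrict _).abs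
      _ = m ^ (α - 1) * ∫ y in Metric.ball x r, |φ y| ^ α ∂μ := by
          rw [measureReal_restrict_apply_univ, Measure.addHaar_real_ball_center]
  have hφα_int : Integrable (fun y => |φ y| ^ α) μ := by
    simpa [ENNReal.toReal_ofReal (by linarith : 0 ≤ α)] using
      hφα.integrable_norm_rpow (ENNReal.ofReal_ne_zero_iff.2 (by linarith))
        ENNReal.ofReal_ne_top
  calc ∫ x, |μ.withDensityᵥ φ (Metric.ball x r)| ^ α ∂μ
      ≤ m ^ (α - 1) * m * ∫ y, |φ y| ^ α ∂μ :=
        integral_le_of_le_integral_ball (fun _ => Real.rpow_nonneg (abs_nonneg _) _) hφα_int hball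
    _ = m ^ α * ∫ y, |φ y| ^ α ∂μ := by
        rw [← Real.rpow_add_one' measureReal_nonneg (by linarith), sub_add_cancel]

theorem integral_abs_withDensityᵥ_ball_rpow_le_integral_abs_pow [ProperSpace E] {α : ℝ}
    (hα : 1 ≤ α) {φ : E → ℝ} (hφ : Integrable φ μ) (r : ℝ) :
    ∫ x, |μ.withDensityᵥ φ (Metric.ball x r)| ^ α ∂μ
      ≤ μ.real (Metric.ball 0 r) * (∫ y, |φ y| ∂μ) ^ α := by
  set M := ∫ y, |φ y| ∂μ
  have hball (x : E) : |μ.withDensityᵥ φ (Metric.ball x r)| ^ α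
      ≤ M ^ (α - 1) * ∫ y in Metric.ball x r, |φ y| ∂μ :=
    calc |μ.withDensityᵥ φ (Metric.ball x r)| ^ α ≤ (∫ y in Metric.ball x r, |φ y| ∂μ) ^ α :=
          Real.rpow_le_rpow (abs_nonneg _)
            (abs_withDensityᵥ_le_setIntegral_abs hφ measurableSet_ball) (by linarith)
      _ ≤ M ^ (α - 1) * ∫ y in Metric.ball x r, |φ y| ∂μ :=
          Real.rpow_le_rpow_sub_one_mul_of_le (setIntegral_nonneg measurableSet_ball
            fun _ _ => abs_nonneg _)
            (setIntegral_le_integral hφ.abs (ae_of_all _ fun _ => abs_nonneg _)) hα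
  calc ∫ x, |μ.withDensityᵥ φ (Metric.ball x r)| ^ α ∂μ
      ≤ M ^ (α - 1) * μ.real (Metric.ball 0 r) * M :=
        integral_le_of_le_integral_ball (fun _ => Real.rpow_nonneg (abs_nonneg _) _) hφ.abs hball
    _ = μ.real (Metric.ball 0 r) * M ^ α := by
        rw [mul_right_comm, mul_comm, ← Real.rpow_add_one' (integral_nonneg fun _ => abs_nonneg _)
          (by linarith), sub_add_cancel]

end HaarBall

theorem memM_of_integral_le {d : ℕ} {α β p q A B : ℝ}
    {μ : SignedMeasure (EuclideanSpace ℝ (Fin d))} (hp : 0 < p) (hpβ : p < β) (hβq : β < q)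
    (hsmall : ∀ r : ℝ, 0 < r → ∫ x, |μ (Metric.ball x r)| ^ α ≤ A * r ^ q)
    (hlarge : ∀ r : ℝ, 0 < r → ∫ x, |μ (Metric.ball x r)| ^ α ≤ B * r ^ p) :
    MemM d α β μ := by
  refine ⟨max A B, p, q, hp, hpβ, hβq, fun r hr => ?_⟩
  rcases le_total r 1 with hr1 | hr1
  · rw [min_eq_right (Real.rpow_le_rpow_of_exponent_ge hr hr1 (by linarith))]
    exact (hsmall r hr).trans (by gcongr; exact le_max_left A B)
  · rw [min_eq_left (Real.rpow_le_rpow_of_exponent_le hr1 (by linarith))]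
    exact (hlarge r hr).trans (by gcongr; exact le_max_right A B)

theorem statement6_general (d : ℕ) (hd : 1 ≤ d) (α β : ℝ) (hα1 : 1 < α)
    (hβ1 : (d : ℝ) < β) (hβ2 : β < α * d)
    (φ : EuclideanSpace ℝ (Fin d) → ℝ)
    (hφ1 : MeasureTheory.Integrable φ)
    (hφα : MeasureTheory.MemLp φ (ENNReal.ofReal α))
    (cd : ℝ) (hcd : cd = (volume (Metric.ball (0 : EuclideanSpace ℝ (Fin d)) 1)).toReal) :
    MemM d α β (volume.withDensityᵥ φ) ∧
    ∀ r : ℝ, 0 < r →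
      (∫ x : EuclideanSpace ℝ (Fin d), |(volume.withDensityᵥ φ) (Metric.ball x r)| ^ α)
          ≤ (cd * r ^ d) ^ α * ∫ y : EuclideanSpace ℝ (Fin d), |φ y| ^ α ∧
      (∫ x : EuclideanSpace ℝ (Fin d), |(volume.withDensityᵥ φ) (Metric.ball x r)| ^ α)
          ≤ cd * r ^ d * (∫ y : EuclideanSpace ℝ (Fin d), |φ y|) ^ α := by
  have hvol (r : ℝ) (hr : 0 < r) :
      volume.real (Metric.ball (0 : EuclideanSpace ℝ (Fin d)) r) = cd * r ^ d := by
    rw [measureReal_def, Measure.addHaar_ball_of_pos _ _ hr, finrank_euclideanSpace_fin,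
      ENNReal.toReal_mul, ENNReal.toReal_ofReal (by positivity), hcd, mul_comm]
  have hbounds (r : ℝ) (hr : 0 < r) := (hvol r hr) ▸
    And.intro (integral_abs_withDensityᵥ_ball_rpow_le_integral_abs_rpow hα1 hφ1 hφα r)
      (integral_abs_withDensityᵥ_ball_rpow_le_integral_abs_pow hα1.le hφ1 r)
  have hcd0 : 0 ≤ cd := hcd ▸ ENNReal.toReal_nonneg
  refine ⟨memM_of_integral_le (A := cd ^ α * ∫ y, |φ y| ^ α) (B := cd * (∫ y, |φ y|) ^ α)
    (by exact_mod_cast hd) hβ1 hβ2 (fun r hr => ?_) (fun r hr => ?_), hbounds⟩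
  · convert (hbounds r hr).1 using 1
    rw [Real.mul_rpow hcd0 (by positivity), ← Real.rpow_natCast, ← Real.rpow_mul hr.le,
      mul_comm (d : ℝ) α]
    ring
  · convert (hbounds r hr).2 using 1
    rw [Real.rpow_natCast]
    ring

/-- if `d < β < αd` and `φ ∈ L¹(ℝ^d) ∩ L^α(ℝ^d)`, the signed measure `μ`
with density `φ` belongs to `M_{α,β}`; more precisely, for every `r > 0`,
`∫ |μ(B(x,r))|^α dx ≤ (c_d r^d)^α ∫|φ|^α` and `∫ |μ(B(x,r))|^α dx ≤ c_d r^d (∫|φ|)^α`. -/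
theorem statement6 (d : ℕ) (hd : 1 ≤ d) (α β : ℝ) (hα1 : 1 < α) (hα2 : α ≤ 2)
    (hβ1 : (d : ℝ) < β) (hβ2 : β < α * d)
    (φ : EuclideanSpace ℝ (Fin d) → ℝ)
    (hφ1 : MeasureTheory.Integrable φ)
    (hφα : MeasureTheory.MemLp φ (ENNReal.ofReal α))
    (cd : ℝ) (hcd : cd = (volume (Metric.ball (0 : EuclideanSpace ℝ (Fin d)) 1)).toReal) :
    MemM d α β (volume.withDensityᵥ φ) ∧
    ∀ r : ℝ, 0 < r →
      (∫ x : EuclideanSpace ℝ (Fin d), |(volume.withDensityᵥ φ) (Metric.ball x r)| ^ α)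
          ≤ (cd * r ^ d) ^ α * ∫ y : EuclideanSpace ℝ (Fin d), |φ y| ^ α ∧
      (∫ x : EuclideanSpace ℝ (Fin d), |(volume.withDensityᵥ φ) (Metric.ball x r)| ^ α)
          ≤ cd * r ^ d * (∫ y : EuclideanSpace ℝ (Fin d), |φ y|) ^ α :=
  statement6_general d hd α β hα1 hβ1 hβ2 φ hφ1 hφα cd hcd
end
end

section
/- Let d ≥ 1 be an integer, 1 < α ≤ 2 and d − 1 < β < d. If φ ∈ L¹(ℝ^d) satisfies ∫_{ℝ^d} φ(y) dy = 0 and ∫_{ℝ^d} ‖y‖ |φ(y)| dy < +∞, then the signed measure μ with density φ, i.e. μ(A) = ∫_A φ(x) dx, belongs to M_{α,β}. -/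
open MeasureTheory Filter Set
open scoped ENNReal Topology

noncomputable section

/-!
Write `g x = μ (B(x,r)) = ∫_{B(x,r)} φ`. Since `|g| ≤ ‖φ‖₁`, we have
`∫ |g|^α ≤ ‖φ‖₁^(α-1) ∫ |g|`, so everything reduces to two `L¹` bounds on `g`, both obtained
from Tonelli after writing `g x = ∫ φ y k(x,y) dy`. With `k(x,y) = 1_{B(y,r)}(x)` one gets
`∫ |g| ≤ ‖φ‖₁ |B(0,r)| ~ r^d`, which is good for small `r`. Since `∫ φ = 0`, one may instead use
`k(x,y) = 1_{B(y,r)}(x) - 1_{B(0,r)}(x)`, whose `x`-integral is `|B(y,r) ∆ B(0,r)| ≲ ‖y‖ r^(d-1)`;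
the finite first moment then gives `∫ |g| ≲ r^(d-1)`, good for large `r`. Hence one may take
`q = d` and any `p ∈ (d-1, β)`.
-/

open Metric Module Measure
open scoped symmDiff

theorem lintegral_enorm_integral_mul_le {X Y : Type*} [MeasurableSpace X] [MeasurableSpace Y]
    {μ : Measure X} {ν : Measure Y} [SFinite μ] [SFinite ν] {φ : Y → ℝ}
    (hφ : AEMeasurable φ ν) {k : X → Y → ℝ} (hk : Measurable (Function.uncurry k)) :
    ∫⁻ x, ‖∫ y, φ y * k x y ∂ν‖ₑ ∂μ ≤ ∫⁻ y, ‖φ y‖ₑ * ∫⁻ x, ‖k x y‖ₑ ∂μ ∂ν :=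
  calc ∫⁻ x, ‖∫ y, φ y * k x y ∂ν‖ₑ ∂μ ≤ ∫⁻ x, ∫⁻ y, ‖φ y‖ₑ * ‖k x y‖ₑ ∂ν ∂μ :=
        lintegral_mono fun _ => (enorm_integral_le_lintegral_enorm _).trans_eq
          (lintegral_congr fun _ => enorm_mul _ _)
    _ = ∫⁻ y, ∫⁻ x, ‖φ y‖ₑ * ‖k x y‖ₑ ∂μ ∂ν :=
        lintegral_lintegral_swap ((hφ.enorm.comp_snd).mul hk.enorm.aemeasurable)
    _ = ∫⁻ y, ‖φ y‖ₑ * ∫⁻ x, ‖k x y‖ₑ ∂μ ∂ν :=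
        lintegral_congr fun _ => lintegral_const_mul' _ _ enorm_ne_top

theorem integral_abs_le_of_lintegral_enorm_le {X : Type*} [MeasurableSpace X] {μ : Measure X}
    {f : X → ℝ} (hf : AEStronglyMeasurable f μ) {C : ℝ} (hC : 0 ≤ C)
    (h : ∫⁻ x, ‖f x‖ₑ ∂μ ≤ ENNReal.ofReal C) : ∫ x, |f x| ∂μ ≤ C := by
  simp_rw [← Real.norm_eq_abs]
  rw [integral_norm_eq_lintegral_enorm hf]
  exact ENNReal.toReal_le_of_le_ofReal hC h

theorem integral_rpow_abs_le {X : Type*} [MeasurableSpace X] {μ : Measure X} {f : X → ℝ}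
    (hf : Integrable f μ) {K α : ℝ} (hK : ∀ x, |f x| ≤ K) (hα : 1 ≤ α) :
    ∫ x, |f x| ^ α ∂μ ≤ K ^ (α - 1) * ∫ x, |f x| ∂μ := by
  have hpt : ∀ x, |f x| ^ α ≤ K ^ (α - 1) * |f x| := fun x => by
    calc |f x| ^ α = |f x| ^ (α - 1) * |f x| := by
          rw [← Real.rpow_add_one' (abs_nonneg _) (by linarith), sub_add_cancel]
      _ ≤ K ^ (α - 1) * |f x| := by gcongr; exact hK x
  rw [← integral_const_mul]
  exact integral_mono_of_nonneg (ae_of_all _ fun _ => by positivity) (hf.abs.const_mul _)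
    (ae_of_all _ hpt)

theorem le_mul_min_rpow_of_le {a A B r p q s : ℝ} (hr : 0 < r) (hA : 0 ≤ A) (hB : 0 ≤ B)
    (hsp : s ≤ p) (hpq : p ≤ q) (haq : a ≤ A * r ^ q) (has : a ≤ B * r ^ s) :
    a ≤ (A + B) * min (r ^ p) (r ^ q) := by
  rcases le_total r 1 with hr1 | hr1
  · rw [min_eq_right (Real.rpow_le_rpow_of_exponent_ge hr hr1 hpq)]
    exact haq.trans (by gcongr; linarith)
  · rw [min_eq_left (Real.rpow_le_rpow_of_exponent_le hr1 hpq)]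
    calc a ≤ B * r ^ s := has
      _ ≤ (A + B) * r ^ p := by gcongr; linarith

theorem lintegral_enorm_indicator_one {X : Type*} [MeasurableSpace X] {μ : Measure X} {s : Set X}
    (hs : MeasurableSet s) :
    ∫⁻ x, ‖s.indicator (1 : X → ℝ) x‖ₑ ∂μ = μ s := by
  simp [enorm_indicator_eq_indicator_enorm, lintegral_indicator hs]

theorem ball_symmDiff_ball_subset {X : Type*} [PseudoMetricSpace X] {x y : X} {r : ℝ} :
    ball x r ∆ ball y r ⊆ ball y (r + dist x y) \ ball y (r - dist x y) := by
  intro z hz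
  have h₁ := dist_triangle z x y
  have h₂ := dist_triangle z y x
  have h₃ := dist_comm x y
  rcases hz with ⟨hzx, hzy⟩ | ⟨hzy, hzx⟩ <;>
    simp only [mem_ball, Set.mem_sdiff, not_lt] at * <;> constructor <;> linarith

theorem indicator_ball_eq_mul_indicator_ball {X : Type*} [PseudoMetricSpace X] (φ : X → ℝ)
    (x y : X) (r : ℝ) :
    (ball x r).indicator φ y = φ y * (ball y r).indicator 1 x := by
  by_cases h : y ∈ ball x r
  · simp [h, mem_ball_comm.mp h]
  · simp [h, indicator_of_notMem (mt mem_ball_comm.mp h)]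

section BallIntegral

variable {X : Type*} [PseudoMetricSpace X] [MeasurableSpace X] [OpensMeasurableSpace X]
  {μ : Measure X} {φ : X → ℝ}

theorem setIntegral_ball_eq_integral_mul_indicator (x : X) (r : ℝ) :
    ∫ y in ball x r, φ y ∂μ = ∫ y, φ y * (ball y r).indicator 1 x ∂μ := by
  rw [← integral_indicator measurableSet_ball]
  exact integral_congr_ae (ae_of_all _ (indicator_ball_eq_mul_indicator_ball φ x · r))

theorem setIntegral_ball_eq_integral_mul_sub_indicator (hφ : Integrable φ μ)
    (hφ0 : ∫ y, φ y ∂μ = 0) (x z : X) (r : ℝ) :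
    ∫ y in ball x r, φ y ∂μ =
      ∫ y, φ y * ((ball y r).indicator 1 x - (ball z r).indicator 1 x) ∂μ := by
  have hint : Integrable (fun y => φ y * (ball y r).indicator 1 x) μ :=
    (hφ.indicator measurableSet_ball).congr
      (ae_of_all _ (indicator_ball_eq_mul_indicator_ball φ x · r))
  simp_rw [mul_sub]
  rw [integral_sub hint (hφ.mul_const _), integral_mul_const, hφ0, zero_mul, sub_zero,
    setIntegral_ball_eq_integral_mul_indicator]

theorem measurable_uncurry_indicator_ball [SecondCountableTopology X] (r : ℝ) :
    Measurable (Function.uncurry fun x y : X => (ball y r).indicator (1 : X → ℝ) x) :=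
  measurable_const.indicator (s := {p : X × X | dist p.1 p.2 < r})
    (measurableSet_lt (measurable_fst.dist measurable_snd) measurable_const)

theorem MeasureTheory.AEStronglyMeasurable.setIntegral_ball [SecondCountableTopology X] [SFinite μ]
    (hφ : AEStronglyMeasurable φ μ) (r : ℝ) :
    AEStronglyMeasurable (fun x => ∫ y in ball x r, φ y ∂μ) μ := by
  simp_rw [setIntegral_ball_eq_integral_mul_indicator]
  exact (hφ.comp_snd.mul (measurable_uncurry_indicator_ball r).aestronglyMeasurable)
    |>.integral_prod_right'

end BallIntegral

section Annulus

variable {E : Type*} [NormedAddCommGroup E] [NormedSpace ℝ E] [MeasurableSpace E] [BorelSpace E]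
  [FiniteDimensional ℝ E] [Nontrivial E] (μ : Measure E) [μ.IsAddHaarMeasure]

theorem measure_ball_symmDiff_ball_le (x y : E) {r : ℝ} (hr : 0 < r) :
    μ (ball x r ∆ ball y r) ≤ ENNReal.ofReal
      (finrank ℝ E * 2 ^ finrank ℝ E * dist x y * r ^ (finrank ℝ E - 1)) * μ (ball 0 1) := by
  set n := finrank ℝ E
  set t := dist x y
  have hn : 1 ≤ n := finrank_pos
  have ht : 0 ≤ t := dist_nonneg
  have hrn : r ^ n = r * r ^ (n - 1) := by rw [← pow_succ', Nat.sub_add_cancel hn]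
  rcases le_or_gt r t with hrt | htr
  · calc μ (ball x r ∆ ball y r) ≤ μ (ball x r) + μ (ball y r) :=
          (measure_mono symmDiff_subset_union).trans (measure_union_le _ _)
      _ = ENNReal.ofReal (2 * r ^ n) * μ (ball 0 1) := by
          rw [addHaar_ball μ x hr.le, addHaar_ball μ y hr.le, ← add_mul,
            ← ENNReal.ofReal_add (by positivity) (by positivity), two_mul]
      _ ≤ _ := by
          gcongr ENNReal.ofReal ?_ * _
          have h2n : (2 : ℝ) ≤ n * 2 ^ n :=
            calc (2 : ℝ) = 1 * 2 ^ 1 := by norm_num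
              _ ≤ n * 2 ^ n := by gcongr <;> norm_cast
          calc 2 * r ^ n ≤ 2 * (t * r ^ (n - 1)) := by rw [hrn]; gcongr
            _ ≤ (n * 2 ^ n) * (t * r ^ (n - 1)) := by gcongr
            _ = _ := by ring
  · calc μ (ball x r ∆ ball y r) ≤ μ (ball y (r + t) \ ball y (r - t)) :=
          measure_mono ball_symmDiff_ball_subset
      _ = ENNReal.ofReal ((r + t) ^ n) * μ (ball 0 1)
            - ENNReal.ofReal ((r - t) ^ n) * μ (ball 0 1) := by
          rw [measure_sdiff (ball_subset_ball (by linarith))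
            measurableSet_ball.nullMeasurableSet measure_ball_lt_top.ne,
            addHaar_ball μ y (by positivity : 0 ≤ r + t),
            addHaar_ball μ y (by linarith : 0 ≤ r - t)]
      _ = ENNReal.ofReal ((r + t) ^ n - (r - t) ^ n) * μ (ball 0 1) := by
          rw [← ENNReal.sub_mul fun _ _ => measure_ball_lt_top.ne,
            ENNReal.ofReal_sub _ (pow_nonneg (by linarith) _)]
      _ ≤ _ := by
          gcongr ENNReal.ofReal ?_ * _
          calc (r + t) ^ n - (r - t) ^ n
              ≤ |(r + t) - (r - t)| * n * max |r + t| |r - t| ^ (n - 1) :=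
                le_of_abs_le (abs_pow_sub_pow_le _ _ _)
            _ ≤ (2 * t) * n * (2 * r) ^ (n - 1) := by
                rw [abs_of_nonneg (by linarith : 0 ≤ (r + t) - (r - t)),
                  abs_of_nonneg (by linarith : 0 ≤ r + t), abs_of_nonneg (by linarith : 0 ≤ r - t),
                  max_eq_left (by linarith)]
                gcongr <;> linarith
            _ = n * 2 ^ n * t * r ^ (n - 1) := by
                have h2 : (2 : ℝ) ^ n = 2 * 2 ^ (n - 1) := by
                  rw [← pow_succ', Nat.sub_add_cancel hn]
                rw [mul_pow, h2]
                ring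

end Annulus

section AddHaar

variable {E : Type*} [NormedAddCommGroup E] [NormedSpace ℝ E] [MeasurableSpace E] [BorelSpace E]
  [FiniteDimensional ℝ E] {μ : Measure E} [μ.IsAddHaarMeasure] {φ : E → ℝ}

theorem lintegral_enorm_setIntegral_ball_le (hφ : AEMeasurable φ μ) (r : ℝ) :
    ∫⁻ x, ‖∫ y in ball x r, φ y ∂μ‖ₑ ∂μ ≤ (∫⁻ y, ‖φ y‖ₑ ∂μ) * μ (ball 0 r) := by
  simp_rw [setIntegral_ball_eq_integral_mul_indicator]
  refine (lintegral_enorm_integral_mul_le hφ (measurable_uncurry_indicator_ball r)).trans_eq ?_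
  rw [← lintegral_mul_const' _ _ measure_ball_lt_top.ne]
  refine lintegral_congr fun y => ?_
  rw [lintegral_enorm_indicator_one measurableSet_ball, addHaar_ball_center]

theorem lintegral_enorm_setIntegral_ball_le_of_integral_eq_zero [Nontrivial E]
    (hφ : Integrable φ μ) (hφ0 : ∫ y, φ y ∂μ = 0) {r : ℝ} (hr : 0 < r) :
    ∫⁻ x, ‖∫ y in ball x r, φ y ∂μ‖ₑ ∂μ ≤ (∫⁻ y, ‖y‖ₑ * ‖φ y‖ₑ ∂μ) *
      (ENNReal.ofReal (finrank ℝ E * 2 ^ finrank ℝ E * r ^ (finrank ℝ E - 1)) * μ (ball 0 1)) := by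
  set c := finrank ℝ E * 2 ^ finrank ℝ E * r ^ (finrank ℝ E - 1)
  have hc : 0 ≤ c := by positivity
  simp_rw [setIntegral_ball_eq_integral_mul_sub_indicator hφ hφ0 _ 0]
  have hk : Measurable (Function.uncurry fun x y : E =>
      (ball y r).indicator (1 : E → ℝ) x - (ball (0 : E) r).indicator 1 x) :=
    (measurable_uncurry_indicator_ball r).sub
      ((measurable_const.indicator measurableSet_ball).comp measurable_fst)
  refine (lintegral_enorm_integral_mul_le hφ.aemeasurable hk).trans ?_
  rw [← lintegral_mul_const' _ _ (ENNReal.mul_ne_top ENNReal.ofReal_ne_top measure_ball_lt_top.ne)]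
  refine lintegral_mono fun y => ?_
  have hsymm : ∀ x, ‖(ball y r).indicator (1 : E → ℝ) x - (ball (0 : E) r).indicator 1 x‖ₑ =
      ‖(ball y r ∆ ball 0 r).indicator (1 : E → ℝ) x‖ₑ := fun x => by
    rw [← Real.enorm_abs, ← abs_indicator_symmDiff, Real.enorm_abs]
  simp_rw [hsymm]
  rw [lintegral_enorm_indicator_one (measurableSet_ball.symmDiff measurableSet_ball)]
  calc ‖φ y‖ₑ * μ (ball y r ∆ ball 0 r)
      ≤ ‖φ y‖ₑ * (ENNReal.ofReal (finrank ℝ E * 2 ^ finrank ℝ E * dist y 0 *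
          r ^ (finrank ℝ E - 1)) * μ (ball 0 1)) := by
        gcongr
        exact measure_ball_symmDiff_ball_le μ y 0 hr
    _ = ‖y‖ₑ * ‖φ y‖ₑ * (ENNReal.ofReal c * μ (ball 0 1)) := by
        rw [dist_zero_right, mul_right_comm _ ‖y‖, ENNReal.ofReal_mul hc,
          ofReal_norm]
        ring

theorem integrable_setIntegral_ball (hφ : Integrable φ μ) (r : ℝ) :
    Integrable (fun x => ∫ y in ball x r, φ y ∂μ) μ :=
  ⟨hφ.aestronglyMeasurable.setIntegral_ball r,
    (lintegral_enorm_setIntegral_ball_le hφ.aemeasurable r).trans_lt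
      (ENNReal.mul_lt_top hφ.2 measure_ball_lt_top)⟩

theorem integral_abs_setIntegral_ball_le (hφ : Integrable φ μ) {r : ℝ} (hr : 0 < r) :
    ∫ x, |∫ y in ball x r, φ y ∂μ| ∂μ ≤
      (∫ y, |φ y| ∂μ) * (r ^ finrank ℝ E * μ.real (ball 0 1)) := by
  refine integral_abs_le_of_lintegral_enorm_le (hφ.aestronglyMeasurable.setIntegral_ball r)
    (by positivity) ((lintegral_enorm_setIntegral_ball_le hφ.aemeasurable r).trans_eq ?_)
  simp_rw [← Real.norm_eq_abs]
  rw [ENNReal.ofReal_mul (integral_nonneg fun _ => norm_nonneg _),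
    ofReal_integral_norm_eq_lintegral_enorm hφ, ENNReal.ofReal_mul (by positivity),
    ofReal_measureReal, addHaar_ball_of_pos μ 0 hr]

theorem integral_abs_setIntegral_ball_le_of_integral_eq_zero [Nontrivial E]
    (hφ : Integrable φ μ) (hφ0 : ∫ y, φ y ∂μ = 0)
    (hφmom : Integrable (fun y => ‖y‖ * |φ y|) μ) {r : ℝ} (hr : 0 < r) :
    ∫ x, |∫ y in ball x r, φ y ∂μ| ∂μ ≤ (∫ y, ‖y‖ * |φ y| ∂μ) *
      (finrank ℝ E * 2 ^ finrank ℝ E * r ^ (finrank ℝ E - 1) * μ.real (ball 0 1)) := by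
  refine integral_abs_le_of_lintegral_enorm_le (hφ.aestronglyMeasurable.setIntegral_ball r)
    (by positivity)
    ((lintegral_enorm_setIntegral_ball_le_of_integral_eq_zero hφ hφ0 hr).trans_eq ?_)
  have hmom : ENNReal.ofReal (∫ y, ‖y‖ * |φ y| ∂μ) = ∫⁻ y, ‖y‖ₑ * ‖φ y‖ₑ ∂μ := by
    calc ENNReal.ofReal (∫ y, ‖y‖ * |φ y| ∂μ) = ENNReal.ofReal (∫ y, ‖‖y‖ * |φ y|‖ ∂μ) := by
          simp_rw [norm_mul, norm_norm, norm_abs_eq_norm, Real.norm_eq_abs]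
      _ = ∫⁻ y, ‖‖y‖ * |φ y|‖ₑ ∂μ := ofReal_integral_norm_eq_lintegral_enorm hφmom
      _ = ∫⁻ y, ‖y‖ₑ * ‖φ y‖ₑ ∂μ := by simp_rw [enorm_mul, enorm_norm, Real.enorm_abs]
  rw [ENNReal.ofReal_mul (integral_nonneg fun _ => by positivity), hmom,
    ENNReal.ofReal_mul' measureReal_nonneg, ofReal_measureReal]

end AddHaar

theorem statement7_general (d : ℕ) (hd : 1 ≤ d) (α β : ℝ) (hα1 : 1 < α)
    (hβ1 : (d : ℝ) - 1 < β) (hβ2 : β < d)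
    (φ : EuclideanSpace ℝ (Fin d) → ℝ)
    (hφ1 : MeasureTheory.Integrable φ)
    (hφ0 : ∫ y : EuclideanSpace ℝ (Fin d), φ y = 0)
    (hφmom : MeasureTheory.Integrable (fun y : EuclideanSpace ℝ (Fin d) => ‖y‖ * |φ y|)) :
    MemM d α β (volume.withDensityᵥ φ) := by
  -- makes `EuclideanSpace ℝ (Fin d)` nontrivial
  have : Nonempty (Fin d) := ⟨⟨0, hd⟩⟩
  have hd' : (1 : ℝ) ≤ d := by exact_mod_cast hd
  set N := ∫ y, |φ y|
  set M := ∫ y, ‖y‖ * |φ y|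
  set V := volume.real (ball (0 : EuclideanSpace ℝ (Fin d)) 1)
  have hN : 0 ≤ N := integral_nonneg fun _ => abs_nonneg _
  refine ⟨N ^ (α - 1) * (N * V) + N ^ (α - 1) * (M * ((d : ℝ) * 2 ^ d * V)), (d - 1 + β) / 2, d,
    by linarith, by linarith, hβ2, fun r hr => ?_⟩
  simp_rw [withDensityᵥ_apply hφ1 measurableSet_ball]
  have hg := integrable_setIntegral_ball hφ1 r
  have hsup : ∀ x, |∫ y in ball x r, φ y| ≤ N := fun x =>
    (abs_integral_le_integral_abs).trans
      (setIntegral_le_integral hφ1.abs (ae_of_all _ fun _ => abs_nonneg _))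
  have hpow := integral_rpow_abs_le hg hsup hα1.le
  refine le_mul_min_rpow_of_le hr (by positivity) (by positivity) (s := d - 1) (by linarith)
    (by linarith) ?_ ?_
  · calc _ ≤ N ^ (α - 1) * ∫ x, |∫ y in ball x r, φ y| := hpow
      _ ≤ N ^ (α - 1) * (N * (r ^ d * V)) := by
          gcongr
          simpa only [finrank_euclideanSpace_fin] using integral_abs_setIntegral_ball_le hφ1 hr
      _ = _ := by rw [Real.rpow_natCast]; ring
  · calc _ ≤ N ^ (α - 1) * ∫ x, |∫ y in ball x r, φ y| := hpow
      _ ≤ N ^ (α - 1) * (M * (d * 2 ^ d * r ^ (d - 1) * V)) := by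
          gcongr
          simpa only [finrank_euclideanSpace_fin] using
            integral_abs_setIntegral_ball_le_of_integral_eq_zero hφ1 hφ0 hφmom hr
      _ = _ := by rw [← Nat.cast_pred hd, Real.rpow_natCast]; ring

/-- if `d - 1 < β < d`, `φ ∈ L¹(ℝ^d)` is centered (`∫ φ = 0`) and has a finite
first moment (`∫ ‖y‖ |φ(y)| dy < ∞`), then the signed measure with density `φ`
belongs to `M_{α,β}`. -/
theorem statement7 (d : ℕ) (hd : 1 ≤ d) (α β : ℝ) (hα1 : 1 < α) (hα2 : α ≤ 2)
    (hβ1 : (d : ℝ) - 1 < β) (hβ2 : β < d)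
    (φ : EuclideanSpace ℝ (Fin d) → ℝ)
    (hφ1 : MeasureTheory.Integrable φ)
    (hφ0 : ∫ y : EuclideanSpace ℝ (Fin d), φ y = 0)
    (hφmom : MeasureTheory.Integrable (fun y : EuclideanSpace ℝ (Fin d) => ‖y‖ * |φ y|)) :
    MemM d α β (volume.withDensityᵥ φ) :=
  statement7_general d hd α β hα1 hβ1 hβ2 φ hφ1 hφ0 hφmom
end
end

section
/- Let d ≥ 1 be an integer, 1 < α ≤ 2 and d − 1 < β < d. Every centered finite signed measure with finite support belongs to M_{α,β}: if μ = Σ_{i=1}^p w_i δ_{a_i} with distinct points a_1, …, a_p ∈ ℝ^d, weights w_1, …, w_p ∈ ℝ and Σ_{i=1}^p w_i = 0, then μ ∈ M_{α,β}. -/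
open MeasureTheory Filter Set
open scoped ENNReal Topology

noncomputable section

/-!
Write `M = ∑ᵢ |wᵢ|`. The function `x ↦ μ(B(x,r)) = ∑ᵢ wᵢ 1_{B(aᵢ,r)}(x)` is bounded by `M`, so
`|μ(B(x,r))|^α ≤ M^{α-1} |μ(B(x,r))|`, and the integral is at most `M^{α-1} ∑ᵢ |wᵢ| vol(Sᵢ)` for any
sets `Sᵢ` with `|μ(B(x,r))| ≤ ∑ᵢ |wᵢ| 1_{Sᵢ}(x)`. Taking `Sᵢ = B(aᵢ,r)` gives the bound `O(r^d)`.
Since `∑ᵢ wᵢ = 0`, one may subtract `1_{B(0,r)}` from every indicator and take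
`Sᵢ = B(aᵢ,r) ∆ B(0,r)`, which lies in an annulus of width `2‖aᵢ‖` around the sphere of radius `r`,
of volume `O(r^{d-1})` for `r ≥ 1`. Any `p` between `d - 1` and `β`, and `q = d`, then work.
-/

open Metric Module
open scoped symmDiff

lemma rpow_le_rpow_sub_one_mul {s M α : ℝ} (hα : 1 ≤ α) (hs : 0 ≤ s) (hsM : s ≤ M) :
    s ^ α ≤ M ^ (α - 1) * s := by
  calc s ^ α = s ^ (α - 1) * s := by
        rw [← Real.rpow_add_one' hs (by linarith), sub_add_cancel]
    _ ≤ M ^ (α - 1) * s := by gcongr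

lemma exists_le_mul_min_rpow {F : ℝ → ℝ} {C₁ C₂ s p q : ℝ} (hF : ∀ r, 0 ≤ F r)
    (hsp : s ≤ p) (hpq : p ≤ q) (hsmall : ∀ r, 0 < r → r ≤ 1 → F r ≤ C₁ * r ^ q)
    (hlarge : ∀ r, 1 ≤ r → F r ≤ C₂ * r ^ s) :
    ∃ C, ∀ r, 0 < r → F r ≤ C * min (r ^ p) (r ^ q) := by
  refine ⟨max C₁ C₂, fun r hr ↦ ?_⟩
  rcases le_total r 1 with hr1 | hr1
  · rw [min_eq_right (Real.rpow_le_rpow_of_exponent_ge hr hr1 hpq)]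
    exact (hsmall r hr hr1).trans (by gcongr; apply le_max_left)
  · have hC₂ : 0 ≤ C₂ := by simpa using (hF 1).trans (hlarge 1 le_rfl)
    rw [min_eq_left (Real.rpow_le_rpow_of_exponent_le hr1 hpq)]
    calc F r ≤ C₂ * r ^ s := hlarge r hr1
      _ ≤ C₂ * r ^ p := by gcongr
      _ ≤ max C₁ C₂ * r ^ p := by gcongr; apply le_max_right

theorem integral_rpow_abs_le_of_le_sum_indicator {Ω ι : Type*} [MeasurableSpace Ω]
    {ν : Measure Ω} [Fintype ι] {f : Ω → ℝ} {M α : ℝ} {c : ι → ℝ} {S : ι → Set Ω} (hα : 1 ≤ α)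
    (hS : ∀ i, MeasurableSet (S i)) (hSν : ∀ i, ν (S i) ≠ ∞) (hfM : ∀ x, |f x| ≤ M)
    (hfS : ∀ x, |f x| ≤ ∑ i, c i * (S i).indicator 1 x) :
    ∫ x, |f x| ^ α ∂ν ≤ M ^ (α - 1) * ∑ i, c i * ν.real (S i) := by
  have hint : ∀ i, Integrable ((S i).indicator (1 : Ω → ℝ)) ν := fun i ↦
    (integrable_indicator_iff (hS i)).2 (integrableOn_const (hSν i))
  calc ∫ x, |f x| ^ α ∂ν ≤ ∫ x, M ^ (α - 1) * ∑ i, c i * (S i).indicator 1 x ∂ν := by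
        refine integral_mono_of_nonneg (ae_of_all _ fun x ↦ by positivity)
          ((integrable_finsetSum _ fun i _ ↦ (hint i).const_mul (c i)).const_mul _)
          (ae_of_all _ fun x ↦ ?_)
        have hM : 0 ≤ M := (abs_nonneg _).trans (hfM x)
        calc |f x| ^ α ≤ M ^ (α - 1) * |f x| :=
              rpow_le_rpow_sub_one_mul hα (abs_nonneg _) (hfM x)
          _ ≤ _ := mul_le_mul_of_nonneg_left (hfS x) (Real.rpow_nonneg hM _)
    _ = M ^ (α - 1) * ∑ i, c i * ν.real (S i) := by
        rw [integral_const_mul, integral_finsetSum _ fun i _ ↦ (hint i).const_mul (c i)]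
        simp only [integral_const_mul, integral_indicator_one (hS _)]

section IndicatorSums

variable {X ι : Type*} [Fintype ι] (w : ι → ℝ)

lemma abs_sum_mul_indicator_le (S : ι → Set X) (x : X) :
    |∑ i, w i * (S i).indicator 1 x| ≤ ∑ i, |w i| * (S i).indicator 1 x := by
  refine (Finset.abs_sum_le_sum_abs _ _).trans_eq (Finset.sum_congr rfl fun i _ ↦ ?_)
  rw [abs_mul, abs_of_nonneg (indicator_nonneg (f := 1) (fun _ _ ↦ zero_le_one) x)]

lemma abs_sum_mul_indicator_le_sum_abs (S : ι → Set X) (x : X) :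
    |∑ i, w i * (S i).indicator 1 x| ≤ ∑ i, |w i| := by
  refine (abs_sum_mul_indicator_le w S x).trans (Finset.sum_le_sum fun i _ ↦ ?_)
  exact mul_le_of_le_one_right (abs_nonneg _) (indicator_le_self' (fun _ _ ↦ zero_le_one) x)

lemma abs_sum_mul_indicator_le_of_sum_eq_zero (hw : ∑ i, w i = 0) (S : ι → Set X) (T : Set X)
    (x : X) : |∑ i, w i * (S i).indicator 1 x| ≤ ∑ i, |w i| * (S i ∆ T).indicator 1 x := by
  have hcenter : ∑ i, w i * (S i).indicator 1 x
      = ∑ i, w i * ((S i).indicator 1 x - T.indicator 1 x) := by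
    simp only [mul_sub, Finset.sum_sub_distrib, ← Finset.sum_mul, hw, zero_mul, sub_zero]
  rw [hcenter]
  refine (Finset.abs_sum_le_sum_abs _ _).trans_eq (Finset.sum_congr rfl fun i _ ↦ ?_)
  rw [abs_mul, ← apply_indicator_symmDiff abs_neg,
    abs_of_nonneg (indicator_nonneg (f := 1) (fun _ _ ↦ zero_le_one) x)]

end IndicatorSums

section PointMasses

variable {X ι : Type*} [MeasurableSpace X] [Fintype ι] (w : ι → ℝ) (a : ι → X)

lemma sum_smul_dirac_toSignedMeasure_apply {s : Set X} (hs : MeasurableSet s) :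
    (∑ i, w i • (Measure.dirac (a i)).toSignedMeasure) s = ∑ i, w i * s.indicator 1 (a i) := by
  rw [FunLike.coe_sum, Finset.sum_apply]
  refine Finset.sum_congr rfl fun i _ ↦ ?_
  rw [smul_apply, Measure.toSignedMeasure_apply_measurable hs, measureReal_def,
    Measure.dirac_apply' _ hs, smul_eq_mul]
  by_cases h : a i ∈ s <;> simp [h]

lemma sum_smul_dirac_toSignedMeasure_ball [PseudoMetricSpace X] [OpensMeasurableSpace X]
    (x : X) (r : ℝ) :
    (∑ i, w i • (Measure.dirac (a i)).toSignedMeasure) (ball x r)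
      = ∑ i, w i * (ball (a i) r).indicator 1 x := by
  rw [sum_smul_dirac_toSignedMeasure_apply w a measurableSet_ball]
  classical
  refine Finset.sum_congr rfl fun i _ ↦ ?_
  rw [indicator_apply, indicator_apply, mem_ball_comm, Pi.one_apply, Pi.one_apply]

end PointMasses

lemma ball_symmDiff_ball_zero_subset {E : Type*} [SeminormedAddCommGroup E] (a : E) (r : ℝ) :
    ball a r ∆ ball 0 r ⊆ ball 0 (r + ‖a‖) \ ball 0 (max (r - ‖a‖) 0) := by
  intro x hx
  have h₁ := norm_sub_le x a
  have h₂ := norm_sub_norm_le x a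
  simp only [mem_symmDiff, mem_ball, dist_eq_norm, sub_zero] at hx
  simp only [Set.mem_sdiff, mem_ball, dist_zero_right, not_lt]
  constructor
  · rcases hx with ⟨h, -⟩ | ⟨h, -⟩ <;> linarith
  · exact max_le (by rcases hx with ⟨-, h⟩ | ⟨-, h⟩ <;> linarith) (norm_nonneg x)

section AddHaar

variable {E : Type*} [NormedAddCommGroup E] [NormedSpace ℝ E] [MeasurableSpace E] [BorelSpace E]
  [FiniteDimensional ℝ E] [Nontrivial E] (μ : Measure E) [μ.IsAddHaarMeasure]

lemma addHaar_real_ball (x : E) {r : ℝ} (hr : 0 ≤ r) :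
    μ.real (ball x r) = r ^ finrank ℝ E * μ.real (ball 0 1) := by
  rw [measureReal_def, Measure.addHaar_ball μ x hr, ENNReal.toReal_mul,
    ENNReal.toReal_ofReal (by positivity), measureReal_def]

lemma addHaar_real_ball_sdiff_ball {ρ R : ℝ} (hρ : 0 ≤ ρ) (hρR : ρ ≤ R) :
    μ.real (ball (0 : E) R \ ball 0 ρ)
      = (R ^ finrank ℝ E - ρ ^ finrank ℝ E) * μ.real (ball 0 1) := by
  rw [measureReal_sdiff (ball_subset_ball hρR) measurableSet_ball measure_ball_lt_top.ne,
    addHaar_real_ball μ 0 (hρ.trans hρR), addHaar_real_ball μ 0 hρ, sub_mul]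

lemma exists_addHaar_real_ball_symmDiff_ball_zero_le (a : E) :
    ∃ K, ∀ r, 1 ≤ r → μ.real (ball a r ∆ ball 0 r) ≤ K * r ^ (finrank ℝ E - 1) := by
  set d := finrank ℝ E
  set D := ‖a‖
  refine ⟨2 * D * d * (1 + D) ^ (d - 1) * μ.real (ball 0 1), fun r hr ↦ ?_⟩
  set ρ := max (r - D) 0
  have hD : 0 ≤ D := norm_nonneg a
  have hρR : ρ ≤ r + D := max_le (by linarith) (by linarith)
  have hwidth : r + D - ρ ≤ 2 * D := by linarith [le_max_left (r - D) 0]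
  have hR : r + D ≤ (1 + D) * r := by nlinarith
  have hpow : (r + D) ^ d - ρ ^ d ≤ (r + D - ρ) * d * (r + D) ^ (d - 1) := by
    have := abs_pow_sub_pow_le (r + D) ρ d
    have hρ : 0 ≤ ρ := le_max_right _ _
    rw [abs_of_nonneg (sub_nonneg.2 hρR), abs_of_nonneg (hρ.trans hρR), abs_of_nonneg hρ,
      max_eq_left hρR] at this
    exact (le_abs_self _).trans this
  calc μ.real (ball a r ∆ ball 0 r) ≤ μ.real (ball (0 : E) (r + D) \ ball 0 ρ) :=
        measureReal_mono (ball_symmDiff_ball_zero_subset a r)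
          (measure_ne_top_of_subset sdiff_subset measure_ball_lt_top.ne)
    _ = ((r + D) ^ d - ρ ^ d) * μ.real (ball 0 1) :=
        addHaar_real_ball_sdiff_ball μ (le_max_right _ _) hρR
    _ ≤ (2 * D * d * ((1 + D) * r) ^ (d - 1)) * μ.real (ball 0 1) := by
        gcongr
        calc (r + D) ^ d - ρ ^ d ≤ (r + D - ρ) * d * (r + D) ^ (d - 1) := hpow
          _ ≤ 2 * D * d * ((1 + D) * r) ^ (d - 1) := by gcongr
    _ = 2 * D * d * (1 + D) ^ (d - 1) * μ.real (ball 0 1) * r ^ (d - 1) := by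
        rw [mul_pow]; ring

variable {ι : Type*} [Fintype ι] (w : ι → ℝ) (a : ι → E) {α : ℝ}

lemma integral_rpow_abs_sum_smul_dirac_ball_le (hα : 1 ≤ α) {r : ℝ} (hr : 0 ≤ r) :
    ∫ x, |(∑ i, w i • (Measure.dirac (a i)).toSignedMeasure) (ball x r)| ^ α ∂μ
      ≤ (∑ i, |w i|) ^ α * μ.real (ball 0 1) * r ^ finrank ℝ E := by
  simp only [sum_smul_dirac_toSignedMeasure_ball]
  refine (integral_rpow_abs_le_of_le_sum_indicator hα (fun _ ↦ measurableSet_ball)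
    (fun _ ↦ measure_ball_lt_top.ne) (abs_sum_mul_indicator_le_sum_abs w _)
    (abs_sum_mul_indicator_le w _)).trans_eq ?_
  have hM : 0 ≤ ∑ i, |w i| := Finset.sum_nonneg fun i _ ↦ abs_nonneg (w i)
  have hMα : (∑ i, |w i|) ^ α = (∑ i, |w i|) ^ (α - 1) * ∑ i, |w i| := by
    rw [← Real.rpow_add_one' hM (by linarith), sub_add_cancel]
  simp only [addHaar_real_ball μ _ hr, ← Finset.sum_mul, hMα]
  ring

lemma exists_integral_rpow_abs_sum_smul_dirac_ball_le (hα : 1 ≤ α) (hw : ∑ i, w i = 0) :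
    ∃ C, ∀ r, 1 ≤ r →
      ∫ x, |(∑ i, w i • (Measure.dirac (a i)).toSignedMeasure) (ball x r)| ^ α ∂μ
        ≤ C * r ^ (finrank ℝ E - 1) := by
  choose K hK using fun i ↦ exists_addHaar_real_ball_symmDiff_ball_zero_le μ (a i)
  set M := ∑ i, |w i|
  refine ⟨M ^ (α - 1) * ∑ i, |w i| * K i, fun r hr ↦ ?_⟩
  simp only [sum_smul_dirac_toSignedMeasure_ball]
  have hfin : ∀ i, μ (ball (a i) r ∆ ball 0 r) ≠ ∞ := fun i ↦
    measure_ne_top_of_subset symmDiff_subset_union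
      (measure_union_lt_top measure_ball_lt_top measure_ball_lt_top).ne
  refine (integral_rpow_abs_le_of_le_sum_indicator hα
    (fun _ ↦ measurableSet_ball.symmDiff measurableSet_ball) hfin
    (abs_sum_mul_indicator_le_sum_abs w _)
    (abs_sum_mul_indicator_le_of_sum_eq_zero w hw _ (ball 0 r))).trans ?_
  calc M ^ (α - 1) * ∑ i, |w i| * μ.real (ball (a i) r ∆ ball 0 r)
      ≤ M ^ (α - 1) * ∑ i, |w i| * (K i * r ^ (finrank ℝ E - 1)) := by
        gcongr with i; exact hK i r hr
    _ = M ^ (α - 1) * (∑ i, |w i| * K i) * r ^ (finrank ℝ E - 1) := by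
        rw [mul_assoc, Finset.sum_mul]; simp only [mul_assoc]

end AddHaar

theorem statement8_general (d : ℕ) (hd : 1 ≤ d) (α β : ℝ) (hα1 : 1 < α)
    (hβ1 : (d : ℝ) - 1 < β) (hβ2 : β < d)
    (p : ℕ) (a : Fin p → EuclideanSpace ℝ (Fin d))
    (w : Fin p → ℝ) (hw : ∑ i, w i = 0) :
    MemM d α β (∑ i, w i • (MeasureTheory.Measure.dirac (a i)).toSignedMeasure) := by
  obtain ⟨n, rfl⟩ : ∃ n, d = n + 1 := ⟨d - 1, by omega⟩
  have hnβ : (n : ℝ) < β := by push_cast at hβ1; linarith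
  set μ := ∑ i, w i • (Measure.dirac (a i)).toSignedMeasure
  obtain ⟨C₂, hC₂⟩ := exists_integral_rpow_abs_sum_smul_dirac_ball_le volume w a hα1.le hw
  obtain ⟨C, hC⟩ := exists_le_mul_min_rpow (F := fun r ↦ ∫ x, |μ (ball x r)| ^ α)
    (s := n) (p := (n + β) / 2) (q := (n + 1 : ℕ))
    (fun r ↦ integral_nonneg fun _ ↦ by positivity) (by linarith) (by linarith)
    (fun r hr _ ↦ by
      simpa only [Real.rpow_natCast, finrank_euclideanSpace_fin] using
        integral_rpow_abs_sum_smul_dirac_ball_le volume w a hα1.le hr.le)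
    (fun r hr ↦ by
      simpa only [Real.rpow_natCast, finrank_euclideanSpace_fin, Nat.add_sub_cancel] using
        hC₂ r hr)
  exact ⟨C, (n + β) / 2, (n + 1 : ℕ), by linarith [n.cast_nonneg (α := ℝ)], by linarith, hβ2, hC⟩

/-- if `d - 1 < β < d`, every centered finite signed measure with finite
support, `μ = Σᵢ wᵢ δ_{aᵢ}` with `Σᵢ wᵢ = 0`, belongs to `M_{α,β}`. -/
theorem statement8 (d : ℕ) (hd : 1 ≤ d) (α β : ℝ) (hα1 : 1 < α) (hα2 : α ≤ 2)
    (hβ1 : (d : ℝ) - 1 < β) (hβ2 : β < d)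
    (p : ℕ) (a : Fin p → EuclideanSpace ℝ (Fin d)) (ha : Function.Injective a)
    (w : Fin p → ℝ) (hw : ∑ i, w i = 0) :
    MemM d α β (∑ i, w i • (MeasureTheory.Measure.dirac (a i)).toSignedMeasure) :=
  statement8_general d hd α β hα1 hβ1 hβ2 p a w hw
end
end

section
/- Let β > 0, C_β > 0 and ε ∈ {+1, −1}. Let f : (0,∞) → [0,∞) be locally integrable with f(r) ∼ C_β r^{−1−β} as r → 0 if ε = +1 (resp. as r → +∞ if ε = −1). Let 0 < p < β < q, let C < ∞, and assume ∫_0^∞ (r^p ∧ r^q) f(r) dr < +∞. Let g : (0,∞) → ℂ be continuous with |g(r)| ≤ C (r^p ∧ r^q) for all r > 0, and for each ρ > 0 let g_ρ : (0,∞) → ℂ be continuous with |g(r) − g_ρ(r)| ≤ C (r^p ∧ r^q) for all r > 0 and g_ρ(r) → g(r) pointwise as ρ → ρ₀, where ρ₀ = +∞ if ε = +1 and ρ₀ = 0⁺ if ε = −1. Then lim_{ρ→ρ₀} ρ^{−β} ∫_0^∞ g_ρ(r) f(r/ρ) ρ^{−1} dr = C_β ∫_0^∞ g(r) r^{−1−β}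 dr. -/
/-!
Write `ρ^{-β} f(r/ρ)/ρ = ρ^{-1-β} f(r/ρ)`. As `ρ → ρ₀`, `r/ρ` enters the regime where
`f(s) ∼ C_β s^{-1-β}`, so this rescaled density tends to `C_β r^{-1-β}` pointwise. Fix a region
`T` of that regime on which `f(s) ≤ 2 C_β s^{-1-β}`. Where `r/ρ ∈ T` the integrand is dominated
by a multiple of `r^{-1-β} (r^p ∧ r^q)`, integrable because `p < β < q`, and dominated convergence
applies. Where `r/ρ ∉ T`, `s = r/ρ` is bounded below (`ε = +1`) or above (`ε = -1`), so
`s^a ≲ s^p ∧ s^q` for `a = p` (resp. `a = q`); bounding `r^p ∧ r^q ≤ r^a = ρ^a s^a`, that part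
is `O(ρ^{a-β} ∫ (s^p ∧ s^q) f(s) ds)`, which tends to `0`.
-/

open MeasureTheory Filter Set
open scoped Topology

theorem tendsto_integral_of_dominated_on_of_tendsto_integral_zero {α E ι : Type*}
    [MeasurableSpace α] {μ : Measure α} [NormedAddCommGroup E] [NormedSpace ℝ E]
    {l : Filter ι} [l.IsCountablyGenerated] {F : ι → α → E} {F₀ : α → E} {S : ι → Set α}
    (bound : α → ℝ) (G : ι → α → ℝ) (hS : ∀ n, MeasurableSet (S n))
    (hF_meas : ∀ᶠ n in l, AEStronglyMeasurable (F n) μ)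
    (h_bound : ∀ᶠ n in l, ∀ᵐ x ∂μ, x ∈ S n → ‖F n x‖ ≤ bound x)
    (bound_integrable : Integrable bound μ)
    (h_small : ∀ᶠ n in l, ∀ᵐ x ∂μ, x ∉ S n → ‖F n x‖ ≤ G n x)
    (hG_nonneg : ∀ᶠ n in l, ∀ᵐ x ∂μ, 0 ≤ G n x)
    (hG_int : ∀ᶠ n in l, Integrable (G n) μ)
    (hG : Tendsto (fun n => ∫ x, G n x ∂μ) l (𝓝 0))
    (h_mem : ∀ᵐ x ∂μ, ∀ᶠ n in l, x ∈ S n)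
    (h_lim : ∀ᵐ x ∂μ, Tendsto (fun n => F n x) l (𝓝 (F₀ x))) :
    Tendsto (fun n => ∫ x, F n x ∂μ) l (𝓝 (∫ x, F₀ x ∂μ)) := by
  have h_in_le : ∀ᶠ n in l, ∀ᵐ x ∂μ, ‖(S n).indicator (F n) x‖ ≤ ‖bound x‖ := by
    filter_upwards [h_bound] with n hn
    filter_upwards [hn] with x hx
    by_cases hxS : x ∈ S n
    · simpa [hxS] using (hx hxS).trans (le_abs_self _)
    · simp [hxS]
  have h_in : Tendsto (fun n => ∫ x, (S n).indicator (F n) x ∂μ) l (𝓝 (∫ x, F₀ x ∂μ)) := by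
    refine tendsto_integral_filter_of_dominated_convergence (fun x => ‖bound x‖)
      (hF_meas.mono fun n h => h.indicator (hS n)) h_in_le bound_integrable.norm ?_
    filter_upwards [h_mem, h_lim] with x hx_mem hx_lim
    exact hx_lim.congr' (hx_mem.mono fun n hn => (indicator_of_mem hn _).symm)
  have h_out_le : ∀ᶠ n in l, ∀ᵐ x ∂μ, ‖(S n)ᶜ.indicator (F n) x‖ ≤ G n x := by
    filter_upwards [h_small, hG_nonneg] with n hn hn₀
    filter_upwards [hn, hn₀] with x hx hx₀
    by_cases hxS : x ∈ S n
    · simpa [hxS] using hx₀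
    · simpa [hxS] using hx hxS
  have h_out : Tendsto (fun n => ∫ x, (S n)ᶜ.indicator (F n) x ∂μ) l (𝓝 0) := by
    refine squeeze_zero_norm' ?_ hG
    filter_upwards [h_out_le, hG_int] with n hn hGn
    exact norm_integral_le_of_norm_le hGn hn
  refine (by simpa using h_in.add h_out : Tendsto _ l _).congr' ?_
  filter_upwards [hF_meas, h_in_le, h_out_le, hG_int] with n hn h_in_n h_out_n hGn
  rw [← integral_add (bound_integrable.norm.mono' (hn.indicator (hS n)) h_in_n)
    (hGn.mono' (hn.indicator (hS n).compl) h_out_n)]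
  simp_rw [indicator_self_add_compl_apply]

theorem aestronglyMeasurable_comp_div_restrict_Ioi {E : Type*} [NormedAddCommGroup E]
    {f : ℝ → E} (hf : AEStronglyMeasurable f (volume.restrict (Ioi 0))) {ρ : ℝ} (hρ : 0 < ρ) :
    AEStronglyMeasurable (fun r => f (r / ρ)) (volume.restrict (Ioi 0)) := by
  have h : Measure.QuasiMeasurePreserving (fun r : ℝ => ρ⁻¹ * r)
      (volume.restrict (Ioi 0)) (volume.restrict (Ioi 0)) :=
    (Measure.quasiMeasurePreserving_smul (volume : Measure ℝ) (inv_ne_zero hρ.ne')).restrict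
      fun r (hr : 0 < r) => show 0 < ρ⁻¹ * r by positivity
  simp only [div_eq_inv_mul]
  exact hf.comp_quasiMeasurePreserving h

theorem IntegrableOn.comp_div_Ioi {E : Type*} [NormedAddCommGroup E] {g : ℝ → E}
    (hg : IntegrableOn g (Ioi 0)) {ρ : ℝ} (hρ : 0 < ρ) :
    IntegrableOn (fun r => g (r / ρ)) (Ioi 0) := by
  simpa [div_eq_inv_mul] using (integrableOn_Ioi_comp_mul_left_iff g 0 (inv_pos.2 hρ)).2
    (by simpa using hg)

theorem integral_Ioi_inv_mul_comp_div (g : ℝ → ℝ) {ρ : ℝ} (hρ : 0 < ρ) :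
    ∫ r in Ioi 0, ρ⁻¹ * g (r / ρ) = ∫ s in Ioi 0, g s := by
  rw [integral_const_mul]
  simp only [div_eq_inv_mul]
  rw [integral_comp_mul_left_Ioi g 0 (inv_pos.2 hρ), mul_zero, smul_eq_mul, inv_inv,
    inv_mul_cancel_left₀ hρ.ne']

theorem tendsto_integral_Ioi_mul_inv_mul_comp_div {L : Filter ℝ} {c m : ℝ → ℝ}
    (hLpos : ∀ᶠ ρ in L, 0 < ρ) (hc : Tendsto c L (𝓝 0)) :
    Tendsto (fun ρ => ∫ r in Ioi 0, c ρ * (ρ⁻¹ * m (r / ρ))) L (𝓝 0) := by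
  refine (by simpa using hc.mul_const (∫ s in Ioi 0, m s) : Tendsto _ L _).congr' ?_
  filter_upwards [hLpos] with ρ hρ
  rw [integral_const_mul, integral_Ioi_inv_mul_comp_div m hρ]

theorem rpow_neg_smul_integral_div_smul {E : Type*} [NormedAddCommGroup E] [NormedSpace ℝ E]
    {β ρ : ℝ} (hρ : 0 < ρ) (F : ℝ → ℝ) (u : ℝ → E) :
    ρ ^ (-β) • ∫ r in Ioi 0, (F (r / ρ) / ρ) • u r =
      ∫ r in Ioi 0, (ρ ^ (-1 - β) * F (r / ρ)) • u r := by
  rw [← integral_smul]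
  congr 1 with r
  rw [smul_smul, show -1 - β = -β - 1 by ring, Real.rpow_sub_one hρ.ne']
  ring_nf

theorem min_rpow_nonneg {r : ℝ} (hr : 0 < r) (a b : ℝ) : 0 ≤ min (r ^ a) (r ^ b) :=
  le_min (Real.rpow_nonneg hr.le a) (Real.rpow_nonneg hr.le b)

theorem continuousOn_min_rpow (a b : ℝ) :
    ContinuousOn (fun r : ℝ => min (r ^ a) (r ^ b)) (Ioi 0) :=
  have hc : ∀ c : ℝ, ContinuousOn (fun r : ℝ => r ^ c) (Ioi 0) := fun _ =>
    continuousOn_id.rpow_const fun _ hx => Or.inl (ne_of_gt hx)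
  (hc a).inf (hc b)

theorem integrableOn_Ioi_min_rpow {a b : ℝ} (ha : a < -1) (hb : -1 < b) :
    IntegrableOn (fun r : ℝ => min (r ^ a) (r ^ b)) (Ioi 0) := by
  have hmeas : ∀ s ⊆ Ioi (0 : ℝ), MeasurableSet s →
      AEStronglyMeasurable (fun r : ℝ => min (r ^ a) (r ^ b)) (volume.restrict s) :=
    fun s hs hsm => ((continuousOn_min_rpow a b).mono hs).aestronglyMeasurable hsm
  have hnorm : ∀ r : ℝ, 0 < r → ‖min (r ^ a) (r ^ b)‖ = min (r ^ a) (r ^ b) := fun r hr =>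
    Real.norm_of_nonneg (min_rpow_nonneg hr a b)
  rw [← Ioc_union_Ioi_eq_Ioi zero_le_one]
  refine IntegrableOn.union ?_ ?_
  · refine (intervalIntegral.intervalIntegrable_rpow' hb).1.mono'
      (hmeas _ Ioc_subset_Ioi_self measurableSet_Ioc) ?_
    filter_upwards [ae_restrict_mem measurableSet_Ioc] with r hr
    exact (hnorm r hr.1).trans_le (min_le_right _ _)
  · refine (integrableOn_Ioi_rpow_of_lt ha one_pos).mono'
      (hmeas _ (Ioi_subset_Ioi zero_le_one) measurableSet_Ioi) ?_
    filter_upwards [ae_restrict_mem measurableSet_Ioi] with r (hr : 1 < r)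
    exact (hnorm r (one_pos.trans hr)).trans_le (min_le_left _ _)

theorem rpow_le_mul_min_rpow {a b s t : ℝ} (hs : 0 < s) (ht : 0 < t)
    (hts : t ^ (b - a) ≤ s ^ (b - a)) :
    s ^ a ≤ (min 1 (t ^ (b - a)))⁻¹ * min (s ^ a) (s ^ b) := by
  have hmin : min (s ^ a) (s ^ b) = s ^ a * min 1 (s ^ (b - a)) := by
    rw [mul_min_of_nonneg _ _ (Real.rpow_nonneg hs.le a), mul_one, ← Real.rpow_add hs,
      add_sub_cancel]
  rw [le_inv_mul_iff₀ (lt_min one_pos (Real.rpow_pos_of_pos ht _)), hmin, mul_comm]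
  gcongr

theorem eventually_le_two_mul_of_tendsto_div {α : Type*} {l : Filter α} {u v : α → ℝ}
    (h : Tendsto (fun x => u x / v x) l (𝓝 1)) (hv : ∀ᶠ x in l, 0 < v x) :
    ∀ᶠ x in l, u x ≤ 2 * v x := by
  filter_upwards [h.eventually_lt_const one_lt_two, hv] with x hx hvx
  exact ((div_lt_iff₀ hvx).1 hx).le

theorem tendsto_const_div_atTop_nhdsGT_zero {r : ℝ} (hr : 0 < r) :
    Tendsto (fun ρ : ℝ => r / ρ) atTop (𝓝[>] 0) :=
  (tendsto_inv_atTop_nhdsGT_zero.comp (tendsto_id.atTop_div_const hr)).congr fun ρ =>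
    inv_div ρ r

theorem tendsto_const_div_nhdsGT_zero_atTop {r : ℝ} (hr : 0 < r) :
    Tendsto (fun ρ : ℝ => r / ρ) (𝓝[>] 0) atTop :=
  (tendsto_inv_nhdsGT_zero.const_mul_atTop hr).congr fun ρ => (div_eq_mul_inv r ρ).symm

theorem tendsto_rpow_nhdsGT_zero_zero {y : ℝ} (hy : 0 < y) :
    Tendsto (fun x : ℝ => x ^ y) (𝓝[>] 0) (𝓝 0) := by
  simpa [Real.zero_rpow hy.ne'] using
    (Real.continuousAt_rpow_const 0 y (Or.inr hy.le)).tendsto.mono_left nhdsWithin_le_nhds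

theorem exists_mem_nhdsGT_zero_rpow_le_mul_min_rpow {p q : ℝ} (hpq : p ≤ q) {P : ℝ → Prop}
    (h : ∀ᶠ s in 𝓝[>] (0 : ℝ), P s) :
    ∃ T ∈ 𝓝[>] (0 : ℝ), MeasurableSet T ∧ (∀ s ∈ T, P s) ∧
      ∃ K, 0 ≤ K ∧ ∀ s, 0 < s → s ∉ T → s ^ p ≤ K * min (s ^ p) (s ^ q) := by
  obtain ⟨δ, hδ, hsub⟩ := mem_nhdsGT_iff_exists_Ioo_subset.1 h
  refine ⟨Ioo 0 δ, Ioo_mem_nhdsGT hδ, measurableSet_Ioo, hsub, (min 1 (δ ^ (q - p)))⁻¹,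
    inv_nonneg.2 (le_min zero_le_one (Real.rpow_nonneg hδ.le _)), fun s hs hsT => ?_⟩
  have hδs : δ ≤ s := not_lt.1 fun hsδ => hsT ⟨hs, hsδ⟩
  exact rpow_le_mul_min_rpow hs hδ (Real.rpow_le_rpow hδ.le hδs (sub_nonneg.2 hpq))

theorem exists_mem_atTop_rpow_le_mul_min_rpow {p q : ℝ} (hpq : p ≤ q) {P : ℝ → Prop}
    (h : ∀ᶠ s in atTop, P s) :
    ∃ T ∈ (atTop : Filter ℝ), MeasurableSet T ∧ (∀ s ∈ T, P s) ∧
      ∃ K, 0 ≤ K ∧ ∀ s, 0 < s → s ∉ T → s ^ q ≤ K * min (s ^ p) (s ^ q) := by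
  obtain ⟨M, hM⟩ := eventually_atTop.1 (h.and (eventually_gt_atTop 0))
  have hM₀ : 0 < M := (hM M le_rfl).2
  refine ⟨Ici M, Ici_mem_atTop M, measurableSet_Ici, fun s hs => (hM s hs).1,
    (min 1 (M ^ (p - q)))⁻¹, inv_nonneg.2 (le_min zero_le_one (Real.rpow_nonneg hM₀.le _)),
    fun s hs hsT => ?_⟩
  rw [min_comm (s ^ p)]
  exact rpow_le_mul_min_rpow hs hM₀
    (Real.rpow_le_rpow_of_nonpos hs (not_le.1 hsT).le (sub_nonpos.2 hpq))

section RescaledDensity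

variable {β p q : ℝ} {f : ℝ → ℝ}

theorem integrableOn_Ioi_rpow_mul_min_rpow (hpβ : p < β) (hβq : β < q) :
    IntegrableOn (fun r : ℝ => r ^ (-1 - β) * min (r ^ p) (r ^ q)) (Ioi 0) := by
  refine (integrableOn_Ioi_min_rpow (a := p - 1 - β) (b := q - 1 - β) (by linarith)
    (by linarith)).congr_fun (fun r (hr : 0 < r) => ?_) measurableSet_Ioi
  rw [mul_min_of_nonneg _ _ (Real.rpow_nonneg hr.le _), ← Real.rpow_add hr,
    ← Real.rpow_add hr]
  ring_nf

theorem integrableOn_Ioi_min_rpow_mul (hf_nonneg : ∀ r, 0 ≤ f r)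
    (hf_meas : AEStronglyMeasurable f (volume.restrict (Ioi 0)))
    (hmom : ∫⁻ r in Ioi (0 : ℝ), ENNReal.ofReal (min (r ^ p) (r ^ q) * f r) < ⊤) :
    IntegrableOn (fun s => min (s ^ p) (s ^ q) * f s) (Ioi 0) := by
  refine ⟨((continuousOn_min_rpow p q).aestronglyMeasurable measurableSet_Ioi).mul hf_meas,
    (hasFiniteIntegral_iff_ofReal ?_).2 hmom⟩
  filter_upwards [ae_restrict_mem measurableSet_Ioi] with s (hs : 0 < s)
  exact mul_nonneg (min_rpow_nonneg hs p q) (hf_nonneg s)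

theorem tendsto_rpow_mul_comp_div {Cβ r : ℝ} {L Lf : Filter ℝ} (hCβ : Cβ ≠ 0) (hr : 0 < r)
    (hLpos : ∀ᶠ ρ in L, 0 < ρ) (hscale : Tendsto (fun ρ => r / ρ) L Lf)
    (hf : Tendsto (fun s => f s / (Cβ * s ^ (-1 - β))) Lf (𝓝 1)) :
    Tendsto (fun ρ => ρ ^ (-1 - β) * f (r / ρ)) L (𝓝 (Cβ * r ^ (-1 - β))) := by
  refine (by simpa using (hf.comp hscale).mul_const (Cβ * r ^ (-1 - β)) :
    Tendsto _ L _).congr' ?_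
  filter_upwards [hLpos] with ρ hρ
  have hρc : ρ ^ (-1 - β) ≠ 0 := (Real.rpow_pos_of_pos hρ _).ne'
  have hrc : r ^ (-1 - β) ≠ 0 := (Real.rpow_pos_of_pos hr _).ne'
  simp only [Real.div_rpow hr.le hρ.le]
  field_simp

theorem rpow_mul_comp_div_le {A c ρ r : ℝ} (hρ : 0 < ρ) (hr : 0 < r)
    (hf : f (r / ρ) ≤ A * (r / ρ) ^ c) :
    ρ ^ c * f (r / ρ) ≤ A * r ^ c := by
  have hρc : 0 < ρ ^ c := Real.rpow_pos_of_pos hρ c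
  calc ρ ^ c * f (r / ρ) ≤ ρ ^ c * (A * (r / ρ) ^ c) := by gcongr
    _ = A * r ^ c := by rw [Real.div_rpow hr.le hρ.le]; field_simp

theorem rpow_mul_comp_div_mul_min_rpow_le {a K ρ r : ℝ} (hρ : 0 < ρ) (hr : 0 < r)
    (hf : 0 ≤ f (r / ρ)) (hmin : min (r ^ p) (r ^ q) ≤ r ^ a)
    (hK : (r / ρ) ^ a ≤ K * min ((r / ρ) ^ p) ((r / ρ) ^ q)) :
    ρ ^ (-1 - β) * f (r / ρ) * min (r ^ p) (r ^ q) ≤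
      K * ρ ^ (a - β) * (ρ⁻¹ * (min ((r / ρ) ^ p) ((r / ρ) ^ q) * f (r / ρ))) := by
  have hρc : 0 ≤ ρ ^ (-1 - β) := Real.rpow_nonneg hρ.le _
  have hr_eq : r ^ a = ρ ^ a * (r / ρ) ^ a := by
    rw [← Real.mul_rpow hρ.le (div_pos hr hρ).le, mul_div_cancel₀ _ hρ.ne']
  have hρ_eq : ρ ^ (-1 - β) * ρ ^ a = ρ ^ (a - β) * ρ⁻¹ := by
    rw [← Real.rpow_add hρ, ← Real.rpow_neg_one, ← Real.rpow_add hρ]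
    ring_nf
  calc ρ ^ (-1 - β) * f (r / ρ) * min (r ^ p) (r ^ q)
      ≤ ρ ^ (-1 - β) * f (r / ρ) * (ρ ^ a * (r / ρ) ^ a) := by rw [← hr_eq]; gcongr
    _ = ρ ^ (-1 - β) * ρ ^ a * f (r / ρ) * (r / ρ) ^ a := by ring
    _ ≤ ρ ^ (-1 - β) * ρ ^ a * f (r / ρ) * (K * min ((r / ρ) ^ p) ((r / ρ) ^ q)) := by
      gcongr
    _ = _ := by rw [hρ_eq]; ring

theorem norm_rpow_mul_comp_div_smul_le {E : Type*} [NormedAddCommGroup E] [NormedSpace ℝ E]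
    {C ρ r : ℝ} {z : E} (hρ : 0 < ρ) (hf : 0 ≤ f (r / ρ))
    (hz : ‖z‖ ≤ C * min (r ^ p) (r ^ q)) :
    ‖(ρ ^ (-1 - β) * f (r / ρ)) • z‖ ≤ C * (ρ ^ (-1 - β) * f (r / ρ) * min (r ^ p) (r ^ q)) := by
  have hρf : 0 ≤ ρ ^ (-1 - β) * f (r / ρ) := mul_nonneg (Real.rpow_nonneg hρ.le _) hf
  calc _ = ρ ^ (-1 - β) * f (r / ρ) * ‖z‖ := norm_smul_of_nonneg hρf z
    _ ≤ ρ ^ (-1 - β) * f (r / ρ) * (C * min (r ^ p) (r ^ q)) := mul_le_mul_of_nonneg_left hz hρf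
    _ = _ := by ring

theorem tendsto_rpow_neg_smul_integral_rescaled (hpβ : p < β) (hβq : β < q)
    {Cβ A C K a : ℝ} (hCβ : Cβ ≠ 0) (hC : 0 ≤ C) (hK : 0 ≤ K)
    {L Lf : Filter ℝ} [L.IsCountablyGenerated] (hLpos : ∀ᶠ ρ in L, 0 < ρ)
    (hscale : ∀ r : ℝ, 0 < r → Tendsto (fun ρ => r / ρ) L Lf)
    (hf_nonneg : ∀ r, 0 ≤ f r) (hf_meas : AEStronglyMeasurable f (volume.restrict (Ioi 0)))
    (hf_asym : Tendsto (fun r => f r / (Cβ * r ^ (-1 - β))) Lf (𝓝 1))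
    (hmom : ∫⁻ r in Ioi (0 : ℝ), ENNReal.ofReal (min (r ^ p) (r ^ q) * f r) < ⊤)
    {T : Set ℝ} (hT_mem : T ∈ Lf) (hT_meas : MeasurableSet T)
    (hT_f : ∀ s ∈ T, f s ≤ A * s ^ (-1 - β))
    (hmin : ∀ r : ℝ, 0 < r → min (r ^ p) (r ^ q) ≤ r ^ a)
    (hTc : ∀ s : ℝ, 0 < s → s ∉ T → s ^ a ≤ K * min (s ^ p) (s ^ q))
    (hρa : Tendsto (fun ρ : ℝ => ρ ^ (a - β)) L (𝓝 0))
    {g : ℝ → ℂ} {gof : ℝ → ℝ → ℂ}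
    (hgof_meas : ∀ ρ : ℝ, 0 < ρ → AEStronglyMeasurable (gof ρ) (volume.restrict (Ioi 0)))
    (hgof_bd : ∀ ρ : ℝ, 0 < ρ → ∀ r : ℝ, 0 < r → ‖gof ρ r‖ ≤ C * min (r ^ p) (r ^ q))
    (hgof_lim : ∀ r : ℝ, 0 < r → Tendsto (fun ρ => gof ρ r) L (𝓝 (g r))) :
    Tendsto (fun ρ : ℝ => (ρ ^ (-β)) • ∫ r in Ioi (0 : ℝ), (f (r / ρ) / ρ) • gof ρ r)
      L (𝓝 (Cβ • ∫ r in Ioi (0 : ℝ), (r ^ (-1 - β)) • g r)) := by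
  have hnorm_le : ∀ ρ : ℝ, 0 < ρ → ∀ r : ℝ, 0 < r →
      ‖(ρ ^ (-1 - β) * f (r / ρ)) • gof ρ r‖ ≤
        C * (ρ ^ (-1 - β) * f (r / ρ) * min (r ^ p) (r ^ q)) := fun ρ hρ r hr =>
    norm_rpow_mul_comp_div_smul_le hρ (hf_nonneg _) (hgof_bd ρ hρ r hr)
  rw [← integral_smul]
  simp_rw [smul_smul]
  refine Tendsto.congr'
    (hLpos.mono fun ρ hρ => (rpow_neg_smul_integral_div_smul hρ f (gof ρ)).symm) ?_
  refine tendsto_integral_of_dominated_on_of_tendsto_integral_zero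
    (S := fun ρ => (· / ρ) ⁻¹' T) (fun r => A * C * (r ^ (-1 - β) * min (r ^ p) (r ^ q)))
    (fun ρ r => C * K * ρ ^ (a - β) * (ρ⁻¹ * (min ((r / ρ) ^ p) ((r / ρ) ^ q) * f (r / ρ))))
    (fun ρ => hT_meas.preimage (measurable_id.div_const ρ)) ?_ ?_
    ((integrableOn_Ioi_rpow_mul_min_rpow hpβ hβq).const_mul _) ?_ ?_ ?_ ?_ ?_ ?_
  · filter_upwards [hLpos] with ρ hρ
    exact (aestronglyMeasurable_const.mul
      (aestronglyMeasurable_comp_div_restrict_Ioi hf_meas hρ)).smul (hgof_meas ρ hρ)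
  · filter_upwards [hLpos] with ρ hρ
    filter_upwards [ae_restrict_mem measurableSet_Ioi] with r hr (hrT : r / ρ ∈ T)
    calc _ ≤ C * (ρ ^ (-1 - β) * f (r / ρ) * min (r ^ p) (r ^ q)) := hnorm_le ρ hρ r hr
      _ ≤ C * (A * r ^ (-1 - β) * min (r ^ p) (r ^ q)) :=
        mul_le_mul_of_nonneg_left (mul_le_mul_of_nonneg_right
          (rpow_mul_comp_div_le hρ hr (hT_f _ hrT)) (min_rpow_nonneg hr p q)) hC
      _ = _ := by ring
  · filter_upwards [hLpos] with ρ hρ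
    filter_upwards [ae_restrict_mem measurableSet_Ioi] with r hr (hrT : r / ρ ∉ T)
    calc _ ≤ C * (ρ ^ (-1 - β) * f (r / ρ) * min (r ^ p) (r ^ q)) := hnorm_le ρ hρ r hr
      _ ≤ C * (K * ρ ^ (a - β) * (ρ⁻¹ * (min ((r / ρ) ^ p) ((r / ρ) ^ q) * f (r / ρ)))) :=
        mul_le_mul_of_nonneg_left (rpow_mul_comp_div_mul_min_rpow_le hρ hr (hf_nonneg _)
          (hmin r hr) (hTc _ (div_pos hr hρ) hrT)) hC
      _ = _ := by ring
  · filter_upwards [hLpos] with ρ hρ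
    filter_upwards [ae_restrict_mem measurableSet_Ioi] with r hr
    have := min_rpow_nonneg (div_pos hr hρ) p q
    have := hf_nonneg (r / ρ)
    positivity
  · filter_upwards [hLpos] with ρ hρ
    exact ((IntegrableOn.comp_div_Ioi (integrableOn_Ioi_min_rpow_mul hf_nonneg hf_meas hmom)
      hρ).const_mul ρ⁻¹).const_mul _
  · exact tendsto_integral_Ioi_mul_inv_mul_comp_div (m := fun s => min (s ^ p) (s ^ q) * f s)
      hLpos (by simpa using hρa.const_mul (C * K))
  · filter_upwards [ae_restrict_mem measurableSet_Ioi] with r hr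
    exact hscale r hr hT_mem
  · filter_upwards [ae_restrict_mem measurableSet_Ioi] with r hr
    exact (tendsto_rpow_mul_comp_div hCβ hr hLpos (hscale r hr) hf_asym).smul (hgof_lim r hr)

end RescaledDensity

theorem statement10_general (β Cβ C p q : ℝ) (hCβ : 0 < Cβ)
    (hpβ : p < β) (hβq : β < q)
    (L Lf : Filter ℝ)
    (hfilters : (L = Filter.atTop ∧ Lf = 𝓝[>] (0 : ℝ)) ∨
                (L = 𝓝[>] (0 : ℝ) ∧ Lf = Filter.atTop))
    (f : ℝ → ℝ) (hf_nonneg : ∀ r, 0 ≤ f r)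
    (hf_loc : MeasureTheory.LocallyIntegrableOn f (Set.Ioi 0))
    (hf_asym : Filter.Tendsto (fun r => f r / (Cβ * r ^ (-1 - β))) Lf (𝓝 1))
    (hmom : ∫⁻ r in Set.Ioi (0 : ℝ), ENNReal.ofReal (min (r ^ p) (r ^ q) * f r) < ⊤)
    (g : ℝ → ℂ)
    (hg_bd : ∀ r : ℝ, 0 < r → ‖g r‖ ≤ C * min (r ^ p) (r ^ q))
    (gof : ℝ → ℝ → ℂ) (hgof_cont : ∀ ρ : ℝ, 0 < ρ → ContinuousOn (gof ρ) (Set.Ioi 0))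
    (hgof_bd : ∀ ρ : ℝ, 0 < ρ → ∀ r : ℝ, 0 < r →
      ‖g r - gof ρ r‖ ≤ C * min (r ^ p) (r ^ q))
    (hgof_lim : ∀ r : ℝ, 0 < r → Filter.Tendsto (fun ρ => gof ρ r) L (𝓝 (g r))) :
    Filter.Tendsto
      (fun ρ : ℝ => (ρ ^ (-β)) • ∫ r in Set.Ioi (0 : ℝ), (f (r / ρ) / ρ) • gof ρ r)
      L (𝓝 (Cβ • ∫ r in Set.Ioi (0 : ℝ), (r ^ (-1 - β)) • g r)) := by
  have hpq : p ≤ q := by linarith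
  have hC : 0 ≤ C := (norm_nonneg _).trans (by simpa using hg_bd 1 one_pos)
  have hgof_bd' : ∀ ρ : ℝ, 0 < ρ → ∀ r : ℝ, 0 < r → ‖gof ρ r‖ ≤ 2 * C * min (r ^ p) (r ^ q) :=
    fun ρ hρ r hr => by
      linarith [norm_le_insert' (gof ρ r) (g r), norm_sub_rev (gof ρ r) (g r), hg_bd r hr,
        hgof_bd ρ hρ r hr]
  have hgof_meas : ∀ ρ : ℝ, 0 < ρ → AEStronglyMeasurable (gof ρ) (volume.restrict (Ioi 0)) :=
    fun ρ hρ => (hgof_cont ρ hρ).aestronglyMeasurable measurableSet_Ioi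
  have hf_le : (∀ᶠ s in Lf, 0 < s) → ∀ᶠ s in Lf, f s ≤ 2 * Cβ * s ^ (-1 - β) := fun hpos => by
    simpa only [mul_assoc] using eventually_le_two_mul_of_tendsto_div hf_asym
      (hpos.mono fun s hs => by positivity)
  rcases hfilters with ⟨rfl, rfl⟩ | ⟨rfl, rfl⟩
  · obtain ⟨T, hT_mem, hT_meas, hT_f, K, hK, hTc⟩ :=
      exists_mem_nhdsGT_zero_rpow_le_mul_min_rpow hpq (hf_le self_mem_nhdsWithin)
    refine tendsto_rpow_neg_smul_integral_rescaled hpβ hβq hCβ.ne' (by positivity) hK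
      (eventually_gt_atTop 0) (fun r hr => tendsto_const_div_atTop_nhdsGT_zero hr) hf_nonneg
      hf_loc.aestronglyMeasurable hf_asym hmom hT_mem hT_meas hT_f
      (fun r _ => min_le_left _ _) hTc ?_ hgof_meas hgof_bd' hgof_lim
    simpa using tendsto_rpow_neg_atTop (sub_pos.2 hpβ)
  · obtain ⟨T, hT_mem, hT_meas, hT_f, K, hK, hTc⟩ :=
      exists_mem_atTop_rpow_le_mul_min_rpow hpq (hf_le (eventually_gt_atTop 0))
    exact tendsto_rpow_neg_smul_integral_rescaled (L := 𝓝[>] 0) hpβ hβq hCβ.ne' (by positivity)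
      hK self_mem_nhdsWithin (fun r hr => tendsto_const_div_nhdsGT_zero_atTop hr) hf_nonneg
      hf_loc.aestronglyMeasurable hf_asym hmom hT_mem hT_meas hT_f
      (fun r _ => min_le_right _ _) hTc (tendsto_rpow_nhdsGT_zero_zero (sub_pos.2 hβq))
      hgof_meas hgof_bd' hgof_lim

/-- Lemma on the rescaled radius measure: with the zoom filter `L`
(`atTop` if `ε = +1`, `0⁺` if `ε = -1`) and the tail filter `Lf` (`0⁺` if `ε = +1`,
`atTop` if `ε = -1`), if `f(r) ∼ C_β r^{-1-β}` along `Lf`, `∫ (r^p ∧ r^q) f(r) dr < ∞`,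
`|g(r)| ≤ C (r^p ∧ r^q)`, `|g(r) - g_ρ(r)| ≤ C (r^p ∧ r^q)` and `g_ρ(r) → g(r)` along `L`,
then `ρ^{-β} ∫₀^∞ g_ρ(r) f(r/ρ) ρ^{-1} dr → C_β ∫₀^∞ g(r) r^{-1-β} dr` along `L`. -/
theorem statement10 (β Cβ C p q : ℝ) (hβ : 0 < β) (hCβ : 0 < Cβ)
    (hp : 0 < p) (hpβ : p < β) (hβq : β < q)
    (L Lf : Filter ℝ)
    (hfilters : (L = Filter.atTop ∧ Lf = 𝓝[>] (0 : ℝ)) ∨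
                (L = 𝓝[>] (0 : ℝ) ∧ Lf = Filter.atTop))
    (f : ℝ → ℝ) (hf_nonneg : ∀ r, 0 ≤ f r)
    (hf_loc : MeasureTheory.LocallyIntegrableOn f (Set.Ioi 0))
    (hf_asym : Filter.Tendsto (fun r => f r / (Cβ * r ^ (-1 - β))) Lf (𝓝 1))
    (hmom : ∫⁻ r in Set.Ioi (0 : ℝ), ENNReal.ofReal (min (r ^ p) (r ^ q) * f r) < ⊤)
    (g : ℝ → ℂ) (hg_cont : ContinuousOn g (Set.Ioi 0))
    (hg_bd : ∀ r : ℝ, 0 < r → ‖g r‖ ≤ C * min (r ^ p) (r ^ q))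
    (gof : ℝ → ℝ → ℂ) (hgof_cont : ∀ ρ : ℝ, 0 < ρ → ContinuousOn (gof ρ) (Set.Ioi 0))
    (hgof_bd : ∀ ρ : ℝ, 0 < ρ → ∀ r : ℝ, 0 < r →
      ‖g r - gof ρ r‖ ≤ C * min (r ^ p) (r ^ q))
    (hgof_lim : ∀ r : ℝ, 0 < r → Filter.Tendsto (fun ρ => gof ρ r) L (𝓝 (g r))) :
    Filter.Tendsto
      (fun ρ : ℝ => (ρ ^ (-β)) • ∫ r in Set.Ioi (0 : ℝ), (f (r / ρ) / ρ) • gof ρ r)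
      L (𝓝 (Cβ • ∫ r in Set.Ioi (0 : ℝ), (r ^ (-1 - β)) • g r)) :=
  statement10_general β Cβ C p q hCβ hpβ hβq L Lf hfilters f hf_nonneg hf_loc hf_asym hmom g hg_bd
    gof hgof_cont hgof_bd hgof_lim
end

section
/- Let d ≥ 1 be an integer, 1 < α ≤ 2 and β > 0. Let G be a probability measure on ℝ for which there exist finite constants C₁, C₂ such that ∫_{{|m| ≥ x}} |m| G(dm) ≤ C₁ x^{1−α} and ∫_{[−x,x]} m² G(dm) ≤ C₂ x^{2−α} for all x > 0. Then for every μ ∈ M_{α,β} one has ∫_{ℝ^d × (0,∞) × ℝ} ( |m μ(B(x,r))| ∧ (m μ(B(x,r)))² ) r^{−β−1} dx dr G(dm) < +∞. -/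
open MeasureTheory Filter Set
open scoped ENNReal Topology

noncomputable section

/-! Splitting the `m`-integral at `|m| = |a|⁻¹`, the two moment conditions on `G` give
`∫ (|m a| ∧ (m a)²) G(dm) ≤ (C₁ + C₂) |a|^α`. With `a = μ(B(x,r))`, Tonelli and the defining
bound of `M_{α,β}` reduce the triple integral to `∫₀^∞ (r^p ∧ r^q) r^{-β-1} dr`, which is finite
because `p < β < q`.

The bound in `MemM` is a Bochner integral, so it says something only once `x ↦ |μ(B(x,r))|^α`
is known to be integrable; this follows from `|μ(B)|^α ≤ ‖μ‖^{α-1} |μ|(B)` and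
`∫ |μ|(B(x,r)) dx = vol(B(0,r)) ‖μ‖`. -/

open Metric

section Balls

variable {E : Type*} [PseudoMetricSpace E] [MeasurableSpace E] [OpensMeasurableSpace E]
  [SecondCountableTopology E]

lemma measurable_measure_ball (ρ : Measure E) [SFinite ρ] :
    Measurable fun p : E × ℝ => ρ (ball p.1 p.2) :=
  measurable_measure_prodMk_left (s := {q : (E × ℝ) × E | dist q.2 q.1.1 < q.1.2})
    (isOpen_lt (by fun_prop) (by fun_prop)).measurableSet

lemma measurable_signedMeasure_ball (μ : SignedMeasure E) :
    Measurable fun p : E × ℝ => μ (ball p.1 p.2) := by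
  simp_rw [μ.apply_eq_posPart_real_sub_negPart_real measurableSet_ball, measureReal_def]
  exact (measurable_measure_ball _).ennreal_toReal.sub (measurable_measure_ball _).ennreal_toReal

end Balls

section Haar

variable {E : Type*} [NormedAddCommGroup E] [ProperSpace E]
  [MeasurableSpace E] [BorelSpace E] (ν : Measure E) [ν.IsAddHaarMeasure]

lemma lintegral_measure_ball (ρ : Measure E) [SFinite ρ] (r : ℝ) :
    ∫⁻ x, ρ (ball x r) ∂ν = ν (ball 0 r) * ρ univ := by
  have hS : MeasurableSet {q : E × E | dist q.2 q.1 < r} :=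
    (isOpen_lt (by fun_prop) (by fun_prop)).measurableSet
  calc ∫⁻ x, ρ (ball x r) ∂ν = ν.prod ρ {q : E × E | dist q.2 q.1 < r} :=
        (Measure.prod_apply hS).symm
    _ = ∫⁻ y, ν (ball y r) ∂ρ := by
        rw [Measure.prod_apply_symm hS]
        refine lintegral_congr fun y => congrArg ν ?_
        ext x
        simp [dist_comm y x]
    _ = ν (ball 0 r) * ρ univ := by
        simp_rw [Measure.addHaar_ball_center ν, lintegral_const]

lemma integrable_measureReal_ball (ρ : Measure E) [IsFiniteMeasure ρ] (r : ℝ) :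
    Integrable (fun x => ρ.real (ball x r)) ν := by
  refine integrable_toReal_of_lintegral_ne_top
    ((measurable_measure_ball ρ).comp (measurable_id.prodMk measurable_const)).aemeasurable ?_
  rw [lintegral_measure_ball]
  exact ENNReal.mul_ne_top measure_ball_lt_top.ne (measure_ne_top ρ univ)

lemma integrable_abs_signedMeasure_ball_rpow (μ : SignedMeasure E) {α : ℝ} (hα : 1 ≤ α)
    (r : ℝ) : Integrable (fun x => |μ (ball x r)| ^ α) ν := by
  set M := μ.totalVariation.real univ
  refine ((integrable_measureReal_ball ν μ.totalVariation r).const_mul (M ^ (α - 1))).mono'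
    (((measurable_signedMeasure_ball μ).comp
      (measurable_id.prodMk measurable_const)).abs.pow_const α).aestronglyMeasurable
    (ae_of_all _ fun x => ?_)
  have hμB : |μ (ball x r)| ≤ μ.totalVariation.real (ball x r) :=
    μ.norm_le_totalVariation _
  rw [Real.norm_of_nonneg (by positivity)]
  calc |μ (ball x r)| ^ α = |μ (ball x r)| ^ (α - 1) * |μ (ball x r)| := by
        rw [← Real.rpow_add_one' (abs_nonneg _) (by linarith), sub_add_cancel]
    _ ≤ M ^ (α - 1) * μ.totalVariation.real (ball x r) := by
        gcongr
        exact hμB.trans (measureReal_mono (subset_univ _))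

lemma lintegral_ofReal_abs_signedMeasure_ball_rpow (μ : SignedMeasure E) {α : ℝ} (hα : 1 ≤ α)
    (r : ℝ) :
    ∫⁻ x, ENNReal.ofReal (|μ (ball x r)| ^ α) ∂ν = ENNReal.ofReal (∫ x, |μ (ball x r)| ^ α ∂ν) :=
  (ofReal_integral_eq_lintegral_ofReal (integrable_abs_signedMeasure_ball_rpow ν μ hα r)
    (ae_of_all _ fun _ => by positivity)).symm

end Haar

lemma inv_rpow_sub_mul_rpow {b : ℝ} (hb : 0 < b) (s α : ℝ) : b⁻¹ ^ (s - α) * b ^ s = b ^ α := by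
  rw [Real.inv_rpow hb.le, ← Real.rpow_neg hb.le, ← Real.rpow_add hb, neg_sub, sub_add_cancel]

lemma lintegral_min_abs_sq_le {G : Measure ℝ} {α C₁ C₂ : ℝ}
    (hG1 : ∀ x : ℝ, 0 < x →
      ∫⁻ m in {m : ℝ | x ≤ |m|}, ENNReal.ofReal |m| ∂G ≤ ENNReal.ofReal (C₁ * x ^ (1 - α)))
    (hG2 : ∀ x : ℝ, 0 < x →
      ∫⁻ m in Icc (-x) x, ENNReal.ofReal (m ^ 2) ∂G ≤ ENNReal.ofReal (C₂ * x ^ (2 - α)))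
    (a : ℝ) :
    ∫⁻ m, ENNReal.ofReal (min |m * a| ((m * a) ^ 2)) ∂G ≤
      (ENNReal.ofReal C₁ + ENNReal.ofReal C₂) * ENNReal.ofReal (|a| ^ α) := by
  rcases eq_or_ne a 0 with rfl | ha
  · simp
  have ha' : 0 < |a| := abs_pos.mpr ha
  set t := |a|⁻¹
  have ht : 0 < t := inv_pos.mpr ha'
  have hS : MeasurableSet {m : ℝ | t ≤ |m|} := measurableSet_le measurable_const measurable_abs
  have hSc : {m : ℝ | t ≤ |m|}ᶜ ⊆ Icc (-t) t := fun m hm =>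
    Ioo_subset_Icc_self (abs_lt.mp (not_le.mp hm))
  have tail : ∫⁻ m in {m : ℝ | t ≤ |m|}, ENNReal.ofReal (min |m * a| ((m * a) ^ 2)) ∂G ≤
      ENNReal.ofReal C₁ * ENNReal.ofReal (|a| ^ α) :=
    calc _ ≤ ∫⁻ m in {m : ℝ | t ≤ |m|}, ENNReal.ofReal |m| * ENNReal.ofReal |a| ∂G :=
          lintegral_mono fun m => by
            rw [← ENNReal.ofReal_mul (abs_nonneg m), ← abs_mul]
            exact ENNReal.ofReal_le_ofReal (min_le_left _ _)
      _ ≤ ENNReal.ofReal (C₁ * t ^ (1 - α)) * ENNReal.ofReal |a| := by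
          rw [lintegral_mul_const' _ _ ENNReal.ofReal_ne_top]
          gcongr
          exact hG1 t ht
      _ = ENNReal.ofReal C₁ * ENNReal.ofReal (|a| ^ α) := by
          rw [← ENNReal.ofReal_mul' (abs_nonneg a), mul_assoc, ENNReal.ofReal_mul' (by positivity),
            ← inv_rpow_sub_mul_rpow ha' 1 α, Real.rpow_one]
  have core : ∫⁻ m in {m : ℝ | t ≤ |m|}ᶜ, ENNReal.ofReal (min |m * a| ((m * a) ^ 2)) ∂G ≤
      ENNReal.ofReal C₂ * ENNReal.ofReal (|a| ^ α) :=
    calc _ ≤ ∫⁻ m in Icc (-t) t, ENNReal.ofReal (m ^ 2) * ENNReal.ofReal (a ^ 2) ∂G :=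
          (lintegral_mono fun m => by
            rw [← ENNReal.ofReal_mul (sq_nonneg m), ← mul_pow]
            exact ENNReal.ofReal_le_ofReal (min_le_right _ _)).trans (lintegral_mono_set hSc)
      _ ≤ ENNReal.ofReal (C₂ * t ^ (2 - α)) * ENNReal.ofReal (a ^ 2) := by
          rw [lintegral_mul_const' _ _ ENNReal.ofReal_ne_top]
          gcongr
          exact hG2 t ht
      _ = ENNReal.ofReal C₂ * ENNReal.ofReal (|a| ^ α) := by
          rw [← ENNReal.ofReal_mul' (sq_nonneg a), mul_assoc, ENNReal.ofReal_mul' (by positivity),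
            ← inv_rpow_sub_mul_rpow ha' 2 α, Real.rpow_two, sq_abs]
  calc _ = (∫⁻ m in {m : ℝ | t ≤ |m|}, ENNReal.ofReal (min |m * a| ((m * a) ^ 2)) ∂G) +
        ∫⁻ m in {m : ℝ | t ≤ |m|}ᶜ, ENNReal.ofReal (min |m * a| ((m * a) ^ 2)) ∂G :=
        (lintegral_add_compl _ hS).symm
    _ ≤ _ := by
        rw [add_mul]
        exact add_le_add tail core

lemma integrableOn_Ioi_min_rpow_mul_rpow {p q s : ℝ} (hp : p + s < -1) (hq : -1 < q + s) :
    IntegrableOn (fun r : ℝ => min (r ^ p) (r ^ q) * r ^ s) (Ioi 0) := by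
  have hmeas : ∀ t : Set ℝ,
      AEStronglyMeasurable (fun r : ℝ => min (r ^ p) (r ^ q) * r ^ s) (volume.restrict t) :=
    fun t => by fun_prop
  have bound : ∀ {r : ℝ} (u : ℝ), 0 < r → min (r ^ p) (r ^ q) ≤ r ^ u →
      ‖min (r ^ p) (r ^ q) * r ^ s‖ ≤ r ^ (u + s) := fun u hr h => by
    rw [Real.norm_of_nonneg (by positivity), Real.rpow_add hr]
    gcongr
  rw [← Ioc_union_Ioi_eq_Ioi zero_le_one]
  refine IntegrableOn.union ?_ ?_
  · refine Integrable.mono' ?_ (hmeas _) ((ae_restrict_iff' measurableSet_Ioc).mpr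
      (ae_of_all _ fun r hr => bound q hr.1 (min_le_right _ _)))
    exact (integrableOn_Ioc_iff_integrableOn_Ioo).mpr
      ((intervalIntegral.integrableOn_Ioo_rpow_iff one_pos).mpr hq)
  · refine Integrable.mono' ?_ (hmeas _) ((ae_restrict_iff' measurableSet_Ioi).mpr
      (ae_of_all _ fun r hr => bound p (one_pos.trans hr) (min_le_left _ _)))
    exact (integrableOn_Ioi_rpow_iff one_pos).mpr hp
theorem statement13_general (d : ℕ) (α β : ℝ) (hα1 : 1 < α)
    (G : MeasureTheory.Measure ℝ) (C₁ C₂ : ℝ)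
    (hG1 : ∀ x : ℝ, 0 < x →
      ∫⁻ m in {m : ℝ | x ≤ |m|}, ENNReal.ofReal |m| ∂G ≤ ENNReal.ofReal (C₁ * x ^ (1 - α)))
    (hG2 : ∀ x : ℝ, 0 < x →
      ∫⁻ m in Set.Icc (-x) x, ENNReal.ofReal (m ^ 2) ∂G ≤ ENNReal.ofReal (C₂ * x ^ (2 - α)))
    (μ : MeasureTheory.SignedMeasure (EuclideanSpace ℝ (Fin d))) (hμ : MemM d α β μ) :
    ∫⁻ x : EuclideanSpace ℝ (Fin d), ∫⁻ r in Set.Ioi (0 : ℝ), ∫⁻ m : ℝ,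
      ENNReal.ofReal
        (min |m * μ (Metric.ball x r)| ((m * μ (Metric.ball x r)) ^ 2) * r ^ (-β - 1))
      ∂G < ⊤ := by
  obtain ⟨C, p, q, -, hpβ, hβq, hC⟩ := hμ
  set K := ENNReal.ofReal C₁ + ENNReal.ofReal C₂
  have hK : K ≠ ⊤ := by finiteness
  set F : EuclideanSpace ℝ (Fin d) → ℝ → ℝ≥0∞ := fun x r =>
    ENNReal.ofReal (|μ (ball x r)| ^ α) * ENNReal.ofReal (r ^ (-β - 1))
  have hF : Measurable (Function.uncurry F) :=
    ((measurable_signedMeasure_ball μ).abs.pow_const α).ennreal_ofReal.mul (by fun_prop)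
  calc _ ≤ ∫⁻ x, ∫⁻ r in Ioi (0 : ℝ), K * F x r := by
        refine lintegral_mono fun x => lintegral_mono fun r => ?_
        simp_rw [F, ENNReal.ofReal_mul (le_min (abs_nonneg _) (sq_nonneg _)), ← mul_assoc,
          lintegral_mul_const' _ _ ENNReal.ofReal_ne_top]
        gcongr
        exact lintegral_min_abs_sq_le hG1 hG2 _
    _ = K * ∫⁻ r in Ioi (0 : ℝ), ∫⁻ x, F x r := by
        rw [lintegral_lintegral_swap (measurable_const.mul hF).aemeasurable]
        simp_rw [lintegral_const_mul' _ _ hK]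
    _ ≤ K * ∫⁻ r in Ioi (0 : ℝ), ENNReal.ofReal (C * (min (r ^ p) (r ^ q) * r ^ (-β - 1))) := by
        refine mul_le_mul_right (setLIntegral_mono' measurableSet_Ioi fun r (hr : 0 < r) => ?_) K
        rw [lintegral_mul_const' _ _ ENNReal.ofReal_ne_top,
          lintegral_ofReal_abs_signedMeasure_ball_rpow volume μ hα1.le,
          ← ENNReal.ofReal_mul' (by positivity), ← mul_assoc]
        exact ENNReal.ofReal_le_ofReal (by gcongr; exact hC r hr)
    _ < ⊤ := ENNReal.mul_lt_top hK.lt_top ((integrableOn_Ioi_min_rpow_mul_rpow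
        (by linarith) (by linarith)).const_mul C).lintegral_lt_top

/-- if the probability measure `G` satisfies the tail first-moment bound
`∫_{|m| ≥ x} |m| dG ≤ C₁ x^{1-α}` and the truncated second-moment bound
`∫_{[-x,x]} m² dG ≤ C₂ x^{2-α}` for all `x > 0`, then for every `μ ∈ M_{α,β}`,
`∫ (|m μ(B(x,r))| ∧ (m μ(B(x,r)))²) r^{-β-1} dx dr G(dm) < ∞` (existence condition for the
compensated Poisson integral `J(μ)`). -/
theorem statement13 (d : ℕ) (hd : 1 ≤ d) (α β : ℝ) (hα1 : 1 < α) (hα2 : α ≤ 2) (hβ : 0 < β)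
    (G : MeasureTheory.Measure ℝ) [MeasureTheory.IsProbabilityMeasure G] (C₁ C₂ : ℝ)
    (hG1 : ∀ x : ℝ, 0 < x →
      ∫⁻ m in {m : ℝ | x ≤ |m|}, ENNReal.ofReal |m| ∂G ≤ ENNReal.ofReal (C₁ * x ^ (1 - α)))
    (hG2 : ∀ x : ℝ, 0 < x →
      ∫⁻ m in Set.Icc (-x) x, ENNReal.ofReal (m ^ 2) ∂G ≤ ENNReal.ofReal (C₂ * x ^ (2 - α)))
    (μ : MeasureTheory.SignedMeasure (EuclideanSpace ℝ (Fin d))) (hμ : MemM d α β μ) :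
    ∫⁻ x : EuclideanSpace ℝ (Fin d), ∫⁻ r in Set.Ioi (0 : ℝ), ∫⁻ m : ℝ,
      ENNReal.ofReal
        (min |m * μ (Metric.ball x r)| ((m * μ (Metric.ball x r)) ^ 2) * r ^ (-β - 1))
      ∂G < ⊤ :=
  statement13_general d α β hα1 G C₁ C₂ hG1 hG2 μ hμ
end
end

section
/- (Self-similarity of the limit stable field Z_α, expressed on its characteristic exponent.) Let d ≥ 1 be an integer, 1 < α ≤ 2, β > 0 and b ∈ [−1,1]. For θ ∈ ℝ and μ ∈ M_{α,β} define I_θ(μ) = ∫_{ℝ^d × (0,∞)} |θ μ(B(x,r))|^α (1 − i b sgn(θ μ(B(x,r))) tan(πα/2)) r^{−1−β} dr dx, a well-defined element of ℂ. Then for every μ ∈ M_{α,β}, every a > 0 and every θ ∈ ℝ, one has I_θ(μ_a) = a^{d−β} I_θ(μ), where μ_a(A) = μ(a^{−1}A). Equivalently, I_θ(μ_a) = I_{a^{(d−β)/α}θ}(μ). -/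
open MeasureTheory Filter Set
open scoped ENNReal Topology

noncomputable section

/-- The characteristic exponent `I_θ(μ) = ∫∫ |θ μ(B(x,r))|^α
(1 - i b sgn(θ μ(B(x,r))) tan(πα/2)) r^{-1-β} dr dx` of the stable field `Z_α`. -/
def Iexp (d : ℕ) (α β b θ : ℝ)
    (μ : MeasureTheory.SignedMeasure (EuclideanSpace ℝ (Fin d))) : ℂ :=
  ∫ x : EuclideanSpace ℝ (Fin d), ∫ r in Set.Ioi (0 : ℝ),
    (|θ * μ (Metric.ball x r)| ^ α * r ^ (-1 - β)) •
      (1 - Complex.I * Complex.ofReal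
        (b * Real.sign (θ * μ (Metric.ball x r)) * Real.tan (Real.pi * α / 2)))

/-
Both identities are changes of variables in the defining double integral. Since
`μ_a(B(x,r)) = μ(B(a⁻¹x, a⁻¹r))`, substituting `x ↦ a x` costs the Jacobian `a^d` and
`r ↦ a r` turns `r^{-1-β} dr` into `a^{-β} r^{-1-β} dr`, giving `I_θ(μ_a) = a^{d-β} I_θ(μ)`.
The integrand is positively `α`-homogeneous in `θ`, so `I_{cθ}(μ) = c^α I_θ(μ)` for `c > 0`,
and `c = a^{(d-β)/α}` gives the second form.
-/

open Metric Module

theorem Real.sign_mul_of_pos {c : ℝ} (hc : 0 < c) (x : ℝ) : Real.sign (c * x) = Real.sign x := by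
  rcases lt_trichotomy x 0 with h | rfl | h
  · rw [Real.sign_of_neg h, Real.sign_of_neg (mul_neg_of_pos_of_neg hc h)]
  · simp
  · rw [Real.sign_of_pos h, Real.sign_of_pos (mul_pos hc h)]

def stableIntegrand (α b θ m : ℝ) : ℂ :=
  |θ * m| ^ α •
    (1 - Complex.I * Complex.ofReal (b * Real.sign (θ * m) * Real.tan (Real.pi * α / 2)))

theorem stableIntegrand_mul_left {c : ℝ} (hc : 0 < c) (α b θ m : ℝ) :
    stableIntegrand α b (c * θ) m = c ^ α • stableIntegrand α b θ m := by
  rw [stableIntegrand, stableIntegrand, mul_assoc, abs_mul, abs_of_pos hc,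
    Real.mul_rpow hc.le (abs_nonneg _), Real.sign_mul_of_pos hc, smul_smul]

theorem Iexp_eq_integral_stableIntegrand (d : ℕ) (α β b θ : ℝ)
    (μ : SignedMeasure (EuclideanSpace ℝ (Fin d))) :
    Iexp d α β b θ μ = ∫ x, ∫ r in Ioi (0 : ℝ),
      r ^ (-1 - β) • stableIntegrand α b θ (μ (ball x r)) := by
  simp only [Iexp, stableIntegrand, smul_smul, mul_comm]

theorem Iexp_mul_left {c : ℝ} (hc : 0 < c) (d : ℕ) (α β b θ : ℝ)
    (μ : SignedMeasure (EuclideanSpace ℝ (Fin d))) :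
    Iexp d α β b (c * θ) μ = c ^ α • Iexp d α β b θ μ := by
  simp only [Iexp_eq_integral_stableIntegrand, stableIntegrand_mul_left hc, smul_comm _ (c ^ α),
    integral_smul]

theorem SignedMeasure.map_smul_apply_ball {E : Type*} [NormedAddCommGroup E] [NormedSpace ℝ E]
    [MeasurableSpace E] [BorelSpace E] (μ : SignedMeasure E) {a : ℝ} (ha : 0 < a) (x : E)
    (r : ℝ) : μ.map (a • ·) (ball x r) = μ (ball (a⁻¹ • x) (a⁻¹ * r)) := by
  rw [VectorMeasure.map_apply _ (measurable_const_smul a) measurableSet_ball,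
    preimage_smul₀ ha.ne', _root_.smul_ball (inv_ne_zero ha.ne'), Real.norm_of_nonneg (inv_pos.2 ha).le]

theorem setIntegral_Ioi_rpow_smul_comp_mul_left {G : Type*} [NormedAddCommGroup G]
    [NormedSpace ℝ G] (g : ℝ → G) (s : ℝ) {b : ℝ} (hb : 0 < b) :
    ∫ r in Ioi (0 : ℝ), r ^ s • g (b * r) = b ^ (-1 - s) • ∫ r in Ioi (0 : ℝ), r ^ s • g r := by
  have hrescale : ∀ r ∈ Ioi (0 : ℝ), r ^ s • g (b * r) = b ^ (-s) • ((b * r) ^ s • g (b * r)) := by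
    intro r hr
    rw [smul_smul, Real.mul_rpow hb.le (le_of_lt hr), ← mul_assoc, ← Real.rpow_add hb,
      neg_add_cancel, Real.rpow_zero, one_mul]
  rw [setIntegral_congr_fun measurableSet_Ioi hrescale, integral_smul,
    integral_comp_mul_left_Ioi (fun r => r ^ s • g r) 0 hb, mul_zero, smul_smul,
    ← Real.rpow_neg_one, ← Real.rpow_add hb, add_comm, ← sub_eq_add_neg]

theorem integral_integral_Ioi_comp_inv_smul {E G : Type*} [NormedAddCommGroup E]
    [NormedSpace ℝ E] [MeasurableSpace E] [BorelSpace E] [FiniteDimensional ℝ E]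
    (ν : Measure E) [ν.IsAddHaarMeasure] [NormedAddCommGroup G] [NormedSpace ℝ G]
    (F : E → ℝ → G) (β : ℝ) {a : ℝ} (ha : 0 < a) :
    ∫ x, (∫ r in Ioi (0 : ℝ), r ^ (-1 - β) • F (a⁻¹ • x) (a⁻¹ * r)) ∂ν =
      a ^ ((finrank ℝ E : ℝ) - β) • ∫ x, (∫ r in Ioi (0 : ℝ), r ^ (-1 - β) • F x r) ∂ν := by
  have hradial : ∀ x, ∫ r in Ioi (0 : ℝ), r ^ (-1 - β) • F x (a⁻¹ * r) =
      a ^ (-β) • ∫ r in Ioi (0 : ℝ), r ^ (-1 - β) • F x r := fun x => by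
    rw [setIntegral_Ioi_rpow_smul_comp_mul_left _ _ (inv_pos.2 ha),
      Real.inv_rpow ha.le, ← Real.rpow_neg ha.le, neg_sub, sub_sub_cancel_left]
  simp only [hradial, integral_smul]
  rw [Measure.integral_comp_inv_smul_of_nonneg ν
      (fun x => ∫ r in Ioi (0 : ℝ), r ^ (-1 - β) • F x r) ha.le,
    smul_smul, ← Real.rpow_natCast, ← Real.rpow_add ha, neg_add_eq_sub]

theorem Iexp_map_smul (d : ℕ) (α β b θ : ℝ) (μ : SignedMeasure (EuclideanSpace ℝ (Fin d)))
    {a : ℝ} (ha : 0 < a) :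
    Iexp d α β b θ (μ.map (a • ·)) = a ^ ((d : ℝ) - β) • Iexp d α β b θ μ := by
  simp only [Iexp_eq_integral_stableIntegrand, SignedMeasure.map_smul_apply_ball μ ha]
  rw [integral_integral_Ioi_comp_inv_smul volume
      (fun x r => stableIntegrand α b θ (μ (ball x r))) β ha, finrank_euclideanSpace_fin]

theorem statement19_general (d : ℕ) (α β b : ℝ)
    (hα1 : 1 < α)
    (μ : MeasureTheory.SignedMeasure (EuclideanSpace ℝ (Fin d)))
    (a : ℝ) (ha : 0 < a) (θ : ℝ) :
    Iexp d α β b θ (μ.map (fun x => a • x)) = (a ^ ((d : ℝ) - β)) • Iexp d α β b θ μ ∧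
    Iexp d α β b θ (μ.map (fun x => a • x)) = Iexp d α β b (a ^ (((d : ℝ) - β) / α) * θ) μ := by
  have hscale := Iexp_map_smul d α β b θ μ ha
  refine ⟨hscale, ?_⟩
  rw [hscale, Iexp_mul_left (Real.rpow_pos_of_pos ha _), ← Real.rpow_mul ha.le,
    div_mul_cancel₀ _ (zero_lt_one.trans hα1).ne']

/-- self-similarity of `Z_α` with index `(d-β)/α`, on its characteristic
exponent: for every `μ ∈ M_{α,β}`, `a > 0` and `θ ∈ ℝ`, with `μ_a = μ.map (a • ·)` (so
that `μ_a(A) = μ(a⁻¹A)`), one has `I_θ(μ_a) = a^{d-β} I_θ(μ)`; equivalently,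
`I_θ(μ_a) = I_{a^{(d-β)/α} θ}(μ)`. -/
theorem statement19 (d : ℕ) (hd : 1 ≤ d) (α β b : ℝ)
    (hα1 : 1 < α) (hα2 : α ≤ 2) (hβ : 0 < β) (hb : b ∈ Set.Icc (-1 : ℝ) 1)
    (μ : MeasureTheory.SignedMeasure (EuclideanSpace ℝ (Fin d))) (hμ : MemM d α β μ)
    (a : ℝ) (ha : 0 < a) (θ : ℝ) :
    Iexp d α β b θ (μ.map (fun x => a • x)) = (a ^ ((d : ℝ) - β)) • Iexp d α β b θ μ ∧
    Iexp d α β b θ (μ.map (fun x => a • x)) = Iexp d α β b (a ^ (((d : ℝ) - β) / α) * θ) μ :=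
  statement19_general d α β b hα1 μ a ha θ
end
end
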